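/- arXiv:2403.08930 — 8 statements merged into one kernel-verified Lean document; each statement's English description precedes it below -/
import Mathlib

section
/- Let Φ be a homogeneous Poisson point process on (0,∞) with intensity λ, with i.i.d. marks h_i that are exponentially distributed with rate μ, independent of Φ. Then tan θ := sup_i h_i/x_i follows a Fréchet distribution with shape parameter 1 and scale ρ = λ/μ, i.e., P[tan θ ≤ t] = exp(−ρ/t) for t > 0. -/
/-!
Conditionally on the interarrival times, the events `h_i ≤ t S_i` at the arrival times `S_i` are
independent with probabilities `1 - e^{-a S_i}`, `a = μ t`, so
`P[h_i ≤ t S_i for all i < n] = Q_n(1)` with `Q_n(u) = E ∏_{i<n} (1 - u e^{-a S_i})`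
(`renewalProdMean λ a n u`).
Splitting off the first interarrival time `s` gives
`Q_{n+1}(u) = E[(1 - u e^{-a s}) Q_n(u e^{-a s})]`.
The function `u ↦ exp (-(λ/a) u)` is a fixed point of this recursion, and since
`E e^{-a s} = λ/(λ + a) < 1`, the recursion contracts `sup_u |Q_n(u) - exp (-(λ/a) u)| / u`
by this factor.
Hence `Q_n(1) → exp (-λ/(μ t))`, and continuity of `P` from above gives the claim.
-/

open MeasureTheory ProbabilityTheory Real Set Filter Topology

lemma Real.tendsto_exp_neg_mul_atTop {b : ℝ} (hb : 0 < b) :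
    Tendsto (fun s => exp (-(b * s))) atTop (𝓝 0) :=
  tendsto_exp_neg_atTop_nhds_zero.comp (tendsto_id.const_mul_atTop hb)

lemma Real.mul_exp_neg_mul_mem_Icc {u a s : ℝ} (hu : u ∈ Icc 0 1) (ha : 0 ≤ a)
    (hs : 0 ≤ s) :
    u * exp (-(a * s)) ∈ Icc 0 1 :=
  ⟨mul_nonneg hu.1 (exp_pos _).le,
    mul_le_one₀ hu.2 (exp_pos _).le (exp_le_one_iff.2 (neg_nonpos.2 (mul_nonneg ha hs)))⟩

namespace Fin

lemma continuous_partialSum {M : Type*} [AddMonoid M] [TopologicalSpace M] [ContinuousAdd M]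
    {n : ℕ} (i : Fin (n + 1)) : Continuous fun w : Fin n → M => partialSum w i := by
  induction i using Fin.induction with
  | zero => simpa using continuous_const
  | succ j ih => simp only [partialSum_succ]; exact ih.add (continuous_apply j)

lemma partialSum_nonneg {M : Type*} [AddMonoid M] [Preorder M] [AddLeftMono M] {n : ℕ}
    {w : Fin n → M} (hw : ∀ j, 0 ≤ w j) (i : Fin (n + 1)) : 0 ≤ partialSum w i := by
  induction i using Fin.induction with
  | zero => simp
  | succ j ih => rw [partialSum_succ]; exact add_nonneg ih (hw j)

lemma partialSum_eq_sum_range {M : Type*} [AddCommMonoid M] {n : ℕ} (f : ℕ → M)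
    (i : Fin (n + 1)) : partialSum (fun j : Fin n => f j) i = ∑ j ∈ Finset.range i, f j := by
  induction i using Fin.induction with
  | zero => simp
  | succ j ih => rw [partialSum_succ, ih, val_succ, Finset.sum_range_succ, val_castSucc]

end Fin

lemma MeasurableEquiv.piFinSuccAbove_zero_symm_apply {α : Type*} [MeasurableSpace α] {n : ℕ}
    (p : α × (Fin n → α)) :
    (MeasurableEquiv.piFinSuccAbove (fun _ : Fin (n + 1) => α) 0).symm p = Fin.cons p.1 p.2 := by
  simp only [piFinSuccAbove_symm_apply, Fin.insertNthEquiv, Equiv.coe_fn_mk, Fin.insertNth_zero']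

lemma MeasureTheory.tendsto_measure_setOf_forall_fin {α : Type*} [MeasurableSpace α]
    {μ : Measure α} [IsFiniteMeasure μ] {p : ℕ → α → Prop}
    (hp : ∀ i, MeasurableSet {a | p i a}) :
    Tendsto (fun n => μ {a | ∀ i : Fin n, p i a}) atTop (𝓝 (μ {a | ∀ i, p i a})) := by
  have hinter : ⋂ n, {a | ∀ i : Fin n, p i a} = {a | ∀ i, p i a} := by
    ext a
    simp only [mem_iInter, mem_ofPred_eq]
    exact ⟨fun H i => H (i + 1) ⟨i, i.lt_succ_self⟩, fun H n i => H i⟩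
  rw [← hinter]
  refine tendsto_measure_iInter_atTop (fun n => ?_) (fun m n hmn a ha i => ha (Fin.castLE hmn i))
    ⟨0, measure_ne_top _ _⟩
  rw [ofPred_forall]
  exact (MeasurableSet.iInter fun i : Fin n => hp i).nullMeasurableSet

namespace ProbabilityTheory

section Exponential

variable {r a : ℝ}

lemma expMeasure_Iic (hr : 0 < r) {s : ℝ} (hs : 0 ≤ s) :
    expMeasure r (Iic s) = ENNReal.ofReal (1 - exp (-(r * s))) := by
  have := isProbabilityMeasure_expMeasure hr
  rw [← ofReal_cdf, cdf_expMeasure_eq hr, if_pos hs]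

lemma ae_pos_expMeasure (hr : 0 < r) : ∀ᵐ s ∂expMeasure r, 0 < s := by
  have h0 : expMeasure r (Iic 0) = 0 := by simp [expMeasure_Iic hr le_rfl]
  rw [ae_iff]
  simp only [not_lt]
  exact h0

lemma map_eq_expMeasure {Ω : Type*} [MeasurableSpace Ω] {P : Measure Ω} [IsProbabilityMeasure P]
    (hr : 0 < r) {f : Ω → ℝ} (hf : Measurable f)
    (hcdf : ∀ s, 0 ≤ s → P {ω | f ω ≤ s} = ENNReal.ofReal (1 - exp (-(r * s)))) :
    P.map f = expMeasure r := by
  have := isProbabilityMeasure_expMeasure hr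
  refine Measure.ext_of_Iic _ _ fun s => ?_
  rw [Measure.map_apply hf measurableSet_Iic]
  rcases le_or_gt 0 s with hs | hs
  · exact (hcdf s hs).trans (expMeasure_Iic hr hs).symm
  · have hexp : expMeasure r (Iic s) = 0 :=
      measure_mono_null (Iic_subset_Iic.2 hs.le) (by simp [expMeasure_Iic hr le_rfl])
    rw [hexp]
    refine measure_mono_null (t := {ω | f ω ≤ 0}) (fun ω hω => le_trans hω hs.le) ?_
    simpa using hcdf 0 le_rfl

lemma integrable_expMeasure_of_bound (hr : 0 < r) {f : ℝ → ℝ}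
    (hf : AEStronglyMeasurable f (expMeasure r)) (C : ℝ) (hC : ∀ s, 0 < s → |f s| ≤ C) :
    Integrable f (expMeasure r) := by
  have := isProbabilityMeasure_expMeasure hr
  exact Integrable.of_bound hf C ((ae_pos_expMeasure hr).mono hC)

lemma integral_expMeasure (hr : 0 < r) (f : ℝ → ℝ) :
    ∫ s, f s ∂expMeasure r = ∫ s in Ioi 0, r * exp (-(r * s)) * f s := by
  have hdens : expMeasure r
      = (volume.restrict (Ici 0)).withDensity fun s => ENNReal.ofReal (r * exp (-(r * s))) := by
    rw [← withDensity_indicator measurableSet_Ici,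
      show expMeasure r = volume.withDensity (exponentialPDF r) from rfl]
    refine congrArg _ (funext fun s => ?_)
    rw [exponentialPDF_eq]
    split_ifs with hs <;> simp [hs]
  rw [hdens, integral_withDensity_eq_integral_toReal_smul (by fun_prop)
    (ae_of_all _ fun _ => ENNReal.ofReal_lt_top), integral_Ici_eq_integral_Ioi]
  refine setIntegral_congr_fun measurableSet_Ioi fun s _ => ?_
  rw [ENNReal.toReal_ofReal (by positivity), smul_eq_mul]

lemma integrable_exp_neg_mul_expMeasure (hr : 0 < r) (ha : 0 ≤ a) :
    Integrable (fun s => exp (-(a * s))) (expMeasure r) :=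
  integrable_expMeasure_of_bound hr (by fun_prop) 1 fun s hs => by
    rw [abs_of_pos (exp_pos _), exp_le_one_iff, neg_nonpos]
    positivity

lemma integral_exp_neg_mul_expMeasure (hr : 0 < r) (hra : 0 < r + a) :
    ∫ s, exp (-(a * s)) ∂expMeasure r = r / (r + a) := by
  have hderiv : ∀ s ∈ Ici (0 : ℝ), HasDerivAt (fun s => r / (r + a) * -exp (-((r + a) * s)))
      (r * exp (-(r * s)) * exp (-(a * s))) s := fun s _ => by
    refine (hasDerivAt_neg_exp_mul_exp.const_mul _).congr_deriv ?_
    rw [mul_assoc r, ← exp_add, ← mul_assoc, div_mul_cancel₀ _ hra.ne']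
    ring_nf
  have hlim : Tendsto (fun s => r / (r + a) * -exp (-((r + a) * s))) atTop (𝓝 0) := by
    simpa using ((tendsto_exp_neg_mul_atTop hra).neg.const_mul (r / (r + a)))
  rw [integral_expMeasure hr, integral_Ioi_of_hasDerivAt_of_nonneg' hderiv
    (fun s _ => by positivity) hlim]
  simp

/-- `u ↦ exp (-(r / a) u)` is a fixed point of the recursion `renewalProdMean_succ`. -/
lemma integral_expMeasure_fixedPoint {u : ℝ} (hr : 0 < r) (ha : 0 < a) (hu : u ≤ 1) :
    ∫ s, (1 - u * exp (-(a * s))) * exp (-(r / a * (u * exp (-(a * s))))) ∂expMeasure r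
      = exp (-(r / a * u)) := by
  have hderiv : ∀ s ∈ Ici (0 : ℝ),
      HasDerivAt (fun s => -exp (-(r * s)) * exp (r / a * u * -exp (-(a * s))))
        (r * exp (-(r * s)) * ((1 - u * exp (-(a * s))) * exp (-(r / a * (u * exp (-(a * s)))))))
        s := fun s _ => by
    refine (hasDerivAt_neg_exp_mul_exp.mul
      (hasDerivAt_neg_exp_mul_exp.const_mul (r / a * u)).exp).congr_deriv ?_
    field_simp
    ring_nf
  have hnonneg : ∀ s ∈ Ioi (0 : ℝ),
      0 ≤ r * exp (-(r * s))
        * ((1 - u * exp (-(a * s))) * exp (-(r / a * (u * exp (-(a * s)))))) :=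
    fun s hs => by
    have : u * exp (-(a * s)) ≤ 1 :=
      mul_le_one₀ hu (exp_pos _).le (exp_le_one_iff.2 (by nlinarith [hs.out]))
    have : 0 ≤ 1 - u * exp (-(a * s)) := by linarith
    positivity
  have hlim : Tendsto (fun s => -exp (-(r * s)) * exp (r / a * u * -exp (-(a * s))))
      atTop (𝓝 0) := by
    have hin := (tendsto_exp_neg_mul_atTop ha).neg.const_mul (r / a * u)
    simpa using (tendsto_exp_neg_mul_atTop hr).neg.mul ((continuous_exp.tendsto _).comp hin)
  rw [integral_expMeasure hr, integral_Ioi_of_hasDerivAt_of_nonneg' hderiv hnonneg hlim]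
  simp

lemma integrable_expMeasure_fixedPoint {u : ℝ} (hr : 0 < r) (ha : 0 < a) (hu : u ∈ Icc 0 1) :
    Integrable (fun s => (1 - u * exp (-(a * s))) * exp (-(r / a * (u * exp (-(a * s))))))
      (expMeasure r) := by
  refine integrable_expMeasure_of_bound hr (by fun_prop) 1 fun s hs => ?_
  have hy := mul_exp_neg_mul_mem_Icc hu ha.le hs.le
  have hexp : exp (-(r / a * (u * exp (-(a * s))))) ≤ 1 :=
    exp_le_one_iff.2 (neg_nonpos.2 (mul_nonneg (by positivity) hy.1))
  rw [abs_mul, abs_of_nonneg (by linarith [hy.2]), abs_of_pos (exp_pos _)]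
  exact mul_le_one₀ (by linarith [hy.1]) (exp_pos _).le hexp

end Exponential

section RenewalProd

/-- With `w` the interarrival times, `Fin.partialSum w i.succ = w 0 + ⋯ + w i` is the `i`-th
arrival time. -/
noncomputable def renewalProd (a u : ℝ) {n : ℕ} (w : Fin n → ℝ) : ℝ :=
  ∏ i : Fin n, (1 - u * exp (-(a * Fin.partialSum w i.succ)))

noncomputable def renewalProdMean (r a : ℝ) (n : ℕ) (u : ℝ) : ℝ :=
  ∫ w, renewalProd a u w ∂Measure.pi fun _ : Fin n => expMeasure r

variable {n : ℕ} {r a u : ℝ}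

lemma renewalProd_cons (s : ℝ) (w : Fin n → ℝ) :
    renewalProd a u (Fin.cons s w : Fin (n + 1) → ℝ)
      = (1 - u * exp (-(a * s))) * renewalProd a (u * exp (-(a * s))) w := by
  simp only [renewalProd, Fin.prod_univ_succ, Fin.partialSum_succ', Fin.cons_zero, Fin.tail_cons]
  congr 1
  · simp
  · refine Finset.prod_congr rfl fun i _ => ?_
    rw [mul_add, neg_add, exp_add, mul_assoc]

lemma continuous_renewalProd (a u : ℝ) :
    Continuous (renewalProd a u : (Fin n → ℝ) → ℝ) := by
  have := Fin.continuous_partialSum (M := ℝ) (n := n)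
  unfold renewalProd
  fun_prop

lemma renewalProd_mem_Icc (ha : 0 ≤ a) (hu : u ∈ Icc 0 1) {w : Fin n → ℝ}
    (hw : ∀ j, 0 ≤ w j) :
    renewalProd a u w ∈ Icc 0 1 := by
  have hfactor i : 1 - u * exp (-(a * Fin.partialSum w i)) ∈ Icc 0 1 := by
    have := mul_exp_neg_mul_mem_Icc hu ha (Fin.partialSum_nonneg hw i)
    constructor <;> linarith [this.1, this.2]
  exact ⟨Finset.prod_nonneg fun i _ => (hfactor _).1,
    Finset.prod_le_one (fun i _ => (hfactor _).1) fun i _ => (hfactor _).2⟩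

lemma ae_pos_pi_expMeasure (hr : 0 < r) :
    ∀ᵐ w ∂Measure.pi fun _ : Fin n => expMeasure r, ∀ j, 0 < w j :=
  have := isProbabilityMeasure_expMeasure hr
  ae_all_iff.2 fun _ => Measure.tendsto_eval_ae_ae.eventually (ae_pos_expMeasure hr)

lemma integrable_renewalProd (hr : 0 < r) (ha : 0 ≤ a) (hu : u ∈ Icc 0 1) :
    Integrable (renewalProd a u) (Measure.pi fun _ : Fin n => expMeasure r) := by
  have := isProbabilityMeasure_expMeasure hr
  refine Integrable.of_bound (continuous_renewalProd a u).aestronglyMeasurable 1 ?_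
  filter_upwards [ae_pos_pi_expMeasure hr] with w hw
  have hmem := renewalProd_mem_Icc ha hu fun j => (hw j).le
  rw [norm_of_nonneg hmem.1]
  exact hmem.2

lemma lintegral_prod_expMeasure_Iic {b c : ℝ} (hr : 0 < r) (hb : 0 < b) (hc : 0 ≤ c) :
    ∫⁻ w, ∏ i : Fin n, expMeasure b (Iic (c * Fin.partialSum w i.succ))
        ∂Measure.pi (fun _ : Fin n => expMeasure r)
      = ENNReal.ofReal (renewalProdMean r (b * c) n 1) := by
  have hu : (1 : ℝ) ∈ Icc 0 1 := ⟨zero_le_one, le_rfl⟩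
  rw [renewalProdMean, ofReal_integral_eq_lintegral_ofReal
    (integrable_renewalProd hr (by positivity) hu)
    ((ae_pos_pi_expMeasure hr).mono fun w hw =>
      (renewalProd_mem_Icc (by positivity) hu fun j => (hw j).le).1)]
  refine lintegral_congr_ae ?_
  filter_upwards [ae_pos_pi_expMeasure hr] with w hw
  have hcS i : 0 ≤ c * Fin.partialSum w i :=
    mul_nonneg hc (Fin.partialSum_nonneg (fun j => (hw j).le) i)
  rw [renewalProd, ENNReal.ofReal_prod_of_nonneg fun i _ => ?_]
  · refine Finset.prod_congr rfl fun i _ => ?_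
    rw [expMeasure_Iic hb (hcS _), one_mul, mul_assoc]
  · rw [one_mul, sub_nonneg, exp_le_one_iff, neg_nonpos, mul_assoc]
    exact mul_nonneg hb.le (hcS _)

lemma renewalProdMean_zero (hr : 0 < r) (a u : ℝ) : renewalProdMean r a 0 u = 1 := by
  have := isProbabilityMeasure_expMeasure hr
  simp [renewalProdMean, renewalProd]

lemma integrable_renewalProd_cons (hr : 0 < r) (ha : 0 ≤ a) (hu : u ∈ Icc 0 1) :
    Integrable
      (fun p : ℝ × (Fin n → ℝ) => renewalProd a u (Fin.cons p.1 p.2 : Fin (n + 1) → ℝ))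
      ((expMeasure r).prod (Measure.pi fun _ : Fin n => expMeasure r)) := by
  have := isProbabilityMeasure_expMeasure hr
  have hmp := (measurePreserving_piFinSuccAbove (fun _ : Fin (n + 1) => expMeasure r) 0).symm
  simpa only [Function.comp_def, MeasurableEquiv.piFinSuccAbove_zero_symm_apply] using
    (hmp.integrable_comp_emb (MeasurableEquiv.measurableEmbedding _)).2
      (integrable_renewalProd hr ha hu)

lemma renewalProdMean_succ (hr : 0 < r) (ha : 0 ≤ a) (hu : u ∈ Icc 0 1) :
    renewalProdMean r a (n + 1) u
      = ∫ s, (1 - u * exp (-(a * s))) * renewalProdMean r a n (u * exp (-(a * s)))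
        ∂expMeasure r := by
  have := isProbabilityMeasure_expMeasure hr
  have hmp := (measurePreserving_piFinSuccAbove (fun _ : Fin (n + 1) => expMeasure r) 0).symm
  rw [renewalProdMean, ← hmp.integral_comp', integral_prod _ (by
    simpa only [MeasurableEquiv.piFinSuccAbove_zero_symm_apply] using
      integrable_renewalProd_cons hr ha hu)]
  simp only [MeasurableEquiv.piFinSuccAbove_zero_symm_apply, renewalProd_cons, integral_const_mul,
    renewalProdMean]

lemma integrable_renewalProdMean_step (hr : 0 < r) (ha : 0 ≤ a) (hu : u ∈ Icc 0 1) :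
    Integrable (fun s => (1 - u * exp (-(a * s))) * renewalProdMean r a n (u * exp (-(a * s))))
      (expMeasure r) := by
  have := isProbabilityMeasure_expMeasure hr
  simpa only [renewalProd_cons, integral_const_mul, renewalProdMean] using
    (integrable_renewalProd_cons hr ha hu).integral_prod_left

lemma abs_renewalProdMean_sub_exp_le (hr : 0 < r) (ha : 0 < a) (n : ℕ) (hu : u ∈ Icc 0 1) :
    |renewalProdMean r a n u - exp (-(r / a * u))| ≤ r / a * (r / (r + a)) ^ n * u := by
  induction n generalizing u with
  | zero =>
    have hcu : 0 ≤ r / a * u := by have := hu.1; positivity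
    rw [renewalProdMean_zero hr, pow_zero, mul_one, abs_of_nonneg (by simpa using hcu)]
    linarith [add_one_le_exp (-(r / a * u))]
  | succ n ih =>
    set y : ℝ → ℝ := fun s => u * exp (-(a * s))
    have hy s (hs : 0 < s) : y s ∈ Icc 0 1 := mul_exp_neg_mul_mem_Icc hu ha.le hs.le
    have hbound : ∀ᵐ s ∂expMeasure r,
        ‖(1 - y s) * renewalProdMean r a n (y s) - (1 - y s) * exp (-(r / a * y s))‖
          ≤ r / a * (r / (r + a)) ^ n * u * exp (-(a * s)) := by
      filter_upwards [ae_pos_expMeasure hr] with s hs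
      rw [← mul_sub, norm_mul, norm_of_nonneg (by linarith [(hy s hs).2]), norm_eq_abs]
      calc (1 - y s) * |renewalProdMean r a n (y s) - exp (-(r / a * y s))|
          ≤ 1 * (r / a * (r / (r + a)) ^ n * y s) :=
            mul_le_mul (by linarith [(hy s hs).1]) (ih (hy s hs)) (abs_nonneg _) zero_le_one
        _ = r / a * (r / (r + a)) ^ n * u * exp (-(a * s)) := by ring
    calc |renewalProdMean r a (n + 1) u - exp (-(r / a * u))|
        = ‖∫ s, (1 - y s) * renewalProdMean r a n (y s) - (1 - y s) * exp (-(r / a * y s))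
            ∂expMeasure r‖ := by
          rw [renewalProdMean_succ hr ha.le hu, ← integral_expMeasure_fixedPoint hr ha hu.2,
            integral_sub (integrable_renewalProdMean_step hr ha.le hu)
              (integrable_expMeasure_fixedPoint hr ha hu), norm_eq_abs]
      _ ≤ ∫ s, r / a * (r / (r + a)) ^ n * u * exp (-(a * s)) ∂expMeasure r :=
          norm_integral_le_of_norm_le
            ((integrable_exp_neg_mul_expMeasure hr ha.le).const_mul _) hbound
      _ = r / a * (r / (r + a)) ^ (n + 1) * u := by
          rw [integral_const_mul, integral_exp_neg_mul_expMeasure hr (by linarith), pow_succ]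
          ring

lemma tendsto_renewalProdMean (hr : 0 < r) (ha : 0 < a) (hu : u ∈ Icc 0 1) :
    Tendsto (fun n => renewalProdMean r a n u) atTop (𝓝 (exp (-(r / a * u)))) := by
  have hgeom : Tendsto (fun n : ℕ => r / a * (r / (r + a)) ^ n * u) atTop (𝓝 0) := by
    simpa using ((tendsto_pow_atTop_nhds_zero_of_lt_one (by positivity)
      ((div_lt_one (by linarith)).2 (by linarith))).const_mul (r / a)).mul_const u
  exact tendsto_iff_norm_sub_tendsto_zero.2 <|
    squeeze_zero (fun _ => norm_nonneg _) (fun n => abs_renewalProdMean_sub_exp_le hr ha n hu) hgeom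

end RenewalProd

section MarkedArrivals

variable {Ω β : Type*} [MeasurableSpace Ω] [MeasurableSpace β] {P : Measure Ω}

lemma map_fin_pair_eq_prod_pi {g h : ℕ → Ω → β} (hgm : ∀ i, Measurable (g i))
    (hhm : ∀ i, Measurable (h i)) (hindep : iIndepFun (Sum.elim g h) P) {ν κ : Measure β}
    (hν : ∀ i, P.map (g i) = ν) (hκ : ∀ i, P.map (h i) = κ) (n : ℕ) :
    P.map (fun ω => ((fun i : Fin n => g i ω), fun i : Fin n => h i ω))
      = (Measure.pi fun _ : Fin n => ν).prod (Measure.pi fun _ : Fin n => κ) := by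
  have := hindep.isProbabilityMeasure
  have : IsProbabilityMeasure ν := hν 0 ▸ Measure.isProbabilityMeasure_map (hgm 0).aemeasurable
  have : IsProbabilityMeasure κ := hκ 0 ▸ Measure.isProbabilityMeasure_map (hhm 0).aemeasurable
  have hm : ∀ k, Measurable (Sum.elim g h k) := Sum.rec hgm hhm
  have hfirst := (hindep.precomp (Sum.map_injective.2 ⟨Fin.val_injective, Fin.val_injective⟩ :
    (Sum.map Fin.val Fin.val : Fin n ⊕ Fin n → ℕ ⊕ ℕ).Injective)).map_fun_eq_pi_map
    fun k => (hm _).aemeasurable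
  have hlaws : (fun k : Fin n ⊕ Fin n => P.map (Sum.elim g h (Sum.map Fin.val Fin.val k)))
      = Sum.elim (fun _ => ν) fun _ => κ := by
    funext k
    cases k with
    | inl i => exact hν i
    | inr i => exact hκ i
  rw [hlaws] at hfirst
  have : ∀ k, SigmaFinite (Sum.elim (fun _ : Fin n => ν) (fun _ : Fin n => κ) k) :=
    Sum.rec (fun _ => show SigmaFinite ν from inferInstance)
      fun _ => show SigmaFinite κ from inferInstance
  have hsplit : (Measure.pi (Sum.elim (fun _ : Fin n => ν) fun _ => κ)).map
      (MeasurableEquiv.sumPiEquivProdPi fun _ => β)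
      = (Measure.pi fun _ : Fin n => ν).prod (Measure.pi fun _ : Fin n => κ) :=
    (measurePreserving_sumPiEquivProdPi _).map_eq
  rw [← hsplit, ← hfirst, Measure.map_map (MeasurableEquiv.measurable _) (by fun_prop)]
  rfl

lemma prod_pi_setOf_le {X ι : Type*} [MeasurableSpace X] [Fintype ι] {μ : Measure X}
    [SFinite μ] {κ : Measure ℝ} [SigmaFinite κ] {f : X → ι → ℝ} (hf : Measurable f) :
    (μ.prod (Measure.pi fun _ : ι => κ)) {p | p.2 ≤ f p.1}
      = ∫⁻ x, ∏ i, κ (Iic (f x i)) ∂μ := by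
  rw [Measure.prod_apply (measurableSet_le (by fun_prop) (by fun_prop))]
  refine lintegral_congr fun x => ?_
  rw [← Measure.pi_pi, pi_univ_Iic]
  rfl

lemma measure_forall_fin_le_mul_sum_range {g h : ℕ → Ω → ℝ} (hgm : ∀ i, Measurable (g i))
    (hhm : ∀ i, Measurable (h i)) (hindep : iIndepFun (Sum.elim g h) P) {lam mu t : ℝ}
    (hlam : 0 < lam) (hmu : 0 < mu) (ht : 0 ≤ t) (hg : ∀ i, P.map (g i) = expMeasure lam)
    (hh : ∀ i, P.map (h i) = expMeasure mu) (n : ℕ) :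
    P {ω | ∀ i : Fin n, h i ω ≤ t * ∑ j ∈ Finset.range (i + 1), g j ω}
      = ENNReal.ofReal (renewalProdMean lam (mu * t) n 1) := by
  have := isProbabilityMeasure_expMeasure hlam
  have := isProbabilityMeasure_expMeasure hmu
  have hS : Measurable fun w : Fin n → ℝ => fun i : Fin n => t * Fin.partialSum w i.succ := by
    have := Fin.continuous_partialSum (M := ℝ) (n := n)
    fun_prop
  have hset : {ω | ∀ i : Fin n, h i ω ≤ t * ∑ j ∈ Finset.range (i + 1), g j ω}
      = (fun ω => ((fun i : Fin n => g i ω), fun i : Fin n => h i ω)) ⁻¹'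
        {p | p.2 ≤ fun i => t * Fin.partialSum p.1 i.succ} := by
    ext ω
    simp [Pi.le_def, Fin.partialSum_eq_sum_range (fun j => g j ω)]
  have hmeas : MeasurableSet {p : (Fin n → ℝ) × (Fin n → ℝ) |
      p.2 ≤ fun i => t * Fin.partialSum p.1 i.succ} :=
    measurableSet_le (by fun_prop) (hS.comp measurable_fst)
  rw [hset, ← Measure.map_apply (by fun_prop) hmeas,
    map_fin_pair_eq_prod_pi hgm hhm hindep hg hh n, prod_pi_setOf_le hS,
    lintegral_prod_expMeasure_Iic hlam hmu ht]

end MarkedArrivals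

end ProbabilityTheory

/-- M/M case: for a homogeneous PPP on (0,∞) with intensity λ
(arrival-time representation) and i.i.d. Exponential(μ) marks independent of it,
tan θ = sup_i h_i/x_i is Fréchet(1, ρ) with ρ = λ/μ: P[tan θ ≤ t] = exp(−ρ/t). -/
theorem blockage_tangent_frechet
    {Ω : Type*} [MeasurableSpace Ω] (P : Measure Ω) [IsProbabilityMeasure P]
    (lam mu : ℝ) (hlam : 0 < lam) (hmu : 0 < mu)
    (g h : ℕ → Ω → ℝ)
    (hgm : ∀ i, Measurable (g i)) (hhm : ∀ i, Measurable (h i))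
    (hindep : iIndepFun (Sum.elim g h) P)
    (hgd : ∀ i, ∀ s : ℝ, 0 ≤ s →
      P {ω | g i ω ≤ s} = ENNReal.ofReal (1 - Real.exp (-(lam * s))))
    (hhd : ∀ i, ∀ s : ℝ, 0 ≤ s →
      P {ω | h i ω ≤ s} = ENNReal.ofReal (1 - Real.exp (-(mu * s))))
    (x : ℕ → Ω → ℝ)
    (hx : ∀ i ω, x i ω = ∑ j ∈ Finset.range (i + 1), g j ω)
    (rho : ℝ) (hrho : rho = lam / mu)
    (t : ℝ) (ht : 0 < t) :
    P {ω | ∀ i, h i ω / x i ω ≤ t} = ENNReal.ofReal (Real.exp (-rho / t)) := by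
  have hg_law i : P.map (g i) = expMeasure lam := map_eq_expMeasure hlam (hgm i) (hgd i)
  have hh_law i : P.map (h i) = expMeasure mu := map_eq_expMeasure hmu (hhm i) (hhd i)
  obtain rfl : x = fun i ω => ∑ j ∈ Finset.range (i + 1), g j ω := funext₂ hx
  have hx_pos : ∀ᵐ ω ∂P, ∀ i, 0 < ∑ j ∈ Finset.range (i + 1), g j ω := by
    have hg_pos : ∀ᵐ ω ∂P, ∀ j, 0 < g j ω := ae_all_iff.2 fun j =>
      ae_of_ae_map (hgm j).aemeasurable (hg_law j ▸ ae_pos_expMeasure hlam)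
    filter_upwards [hg_pos] with ω hω i
    exact Finset.sum_pos (fun j _ => hω j) Finset.nonempty_range_add_one
  have hset : {ω | ∀ i, h i ω / ∑ j ∈ Finset.range (i + 1), g j ω ≤ t}
      =ᵐ[P] {ω | ∀ i, h i ω ≤ t * ∑ j ∈ Finset.range (i + 1), g j ω} := by
    refine eventuallyEq_set.2 ?_
    filter_upwards [hx_pos] with ω hω
    exact forall_congr' fun i => by rw [div_le_iff₀ (hω i), mul_comm]
  have hlim := tendsto_measure_setOf_forall_fin (μ := P)
    (p := fun i ω => h i ω ≤ t * ∑ j ∈ Finset.range (i + 1), g j ω)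
    fun i => measurableSet_le (hhm i)
      (measurable_const.mul (Finset.measurable_sum _ fun j _ => hgm j))
  simp only [measure_forall_fin_le_mul_sum_range hgm hhm hindep hlam hmu ht.le hg_law hh_law]
    at hlim
  rw [measure_congr hset]
  refine tendsto_nhds_unique hlim ?_
  have := (ENNReal.continuous_ofReal.tendsto _).comp
    (tendsto_renewalProdMean hlam (mul_pos hmu ht) ⟨zero_le_one, le_rfl⟩)
  rwa [hrho, neg_div, div_div, ← mul_one (lam / (mu * t))]
end

section
/- Let Φ be a homogeneous Poisson point process on ℝ with intensity λ, with i.i.d. Exponential(μ) marks h_i independent of Φ. For a fixed height h ≥ 0 and position x ∈ ℝ, define tan θ_{x,h} = sup_{x_i > x} (h_i − h)₊/(x_i − x) (only points with h_i > h contribute). Then P[tan θ_{x,h} ≤ t] = exp(−(λ/(μt))·e^{−μh}) for all t > 0; in particular this distribution does not depend on x. -/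
open MeasureTheory ProbabilityTheory Real Set

set_option maxHeartbeats 1000000

open MeasureTheory ProbabilityTheory Real Set Filter Topology
open scoped ENNReal NNReal

namespace BlockageAux

lemma integrableAux {lam t : ℝ} (hlam : 0 < lam) (ht : 0 < t)
    {φ : ℝ → ℝ} (hφm : Measurable φ) {C : ℝ} (hφ : ∀ v, 0 ≤ v → |φ v| ≤ C)
    {u : ℝ} (hu : 0 ≤ u) :
    IntegrableOn (fun s => lam * Real.exp (-(lam * s)) * φ (u + t * s)) (Ioi (0:ℝ)) := by
  have hbase : IntegrableOn (fun s => lam * C * Real.exp (-lam * s)) (Ioi (0:ℝ)) :=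
    (exp_neg_integrableOn_Ioi 0 hlam).const_mul (lam * C)
  refine Integrable.mono' hbase ?_ ?_
  · exact ((measurable_const.mul ((measurable_id.const_mul lam).neg.exp)).mul
      (hφm.comp ((measurable_id.const_mul t).const_add u))).aestronglyMeasurable
  · filter_upwards [self_mem_ae_restrict measurableSet_Ioi] with s hs
    have hv : 0 ≤ u + t * s := by nlinarith [(mem_Ioi.mp hs).le]
    have h1 : |φ (u + t * s)| ≤ C := hφ _ hv
    have habs : |lam * Real.exp (-(lam * s)) * φ (u + t * s)|
        = lam * Real.exp (-(lam * s)) * |φ (u + t * s)| := by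
      rw [abs_mul, abs_of_nonneg (by positivity)]
    rw [Real.norm_eq_abs, habs, neg_mul]
    calc lam * Real.exp (-(lam * s)) * |φ (u + t * s)|
        ≤ lam * Real.exp (-(lam * s)) * C :=
          mul_le_mul_of_nonneg_left h1 (by positivity)
      _ = lam * C * Real.exp (-(lam * s)) := by ring

/-- FTC identity A. -/
lemma intA {lam mu t : ℝ} (hlam : 0 < lam) (hmu : 0 < mu) (ht : 0 < t)
    {u : ℝ} (hu : 0 ≤ u) :
    ∫ s in Ioi (0:ℝ), lam * Real.exp (-(lam * s)) *
      ((1 - Real.exp (-(mu * (u + t * s)))) *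
        Real.exp (-(lam / (mu * t) * Real.exp (-(mu * (u + t * s))))))
      = Real.exp (-(lam / (mu * t) * Real.exp (-(mu * u)))) := by
  set β := lam / (mu * t) with hβ
  have hβ0 : 0 ≤ β := by positivity
  have hβa : β * (mu * t) = lam := by
    rw [hβ, div_mul_cancel₀]
    positivity
  set F : ℝ → ℝ := fun s => -(Real.exp (-(lam * s)) * Real.exp (-(β * Real.exp (-(mu * (u + t * s)))))) with hF
  have hderiv : ∀ s : ℝ, HasDerivAt F
      (lam * Real.exp (-(lam * s)) *
        ((1 - Real.exp (-(mu * (u + t * s)))) * Real.exp (-(β * Real.exp (-(mu * (u + t * s))))))) s := by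
    intro s
    have h1 : HasDerivAt (fun s : ℝ => Real.exp (-(lam * s))) (-lam * Real.exp (-(lam * s))) s := by
      have := ((hasDerivAt_id s).const_mul lam).neg.exp
      simpa [mul_comm] using this
    have h2 : HasDerivAt (fun s : ℝ => Real.exp (-(β * Real.exp (-(mu * (u + t * s))))))
        (Real.exp (-(β * Real.exp (-(mu * (u + t * s))))) *
          (β * (mu * t) * Real.exp (-(mu * (u + t * s))))) s := by
      have hi : HasDerivAt (fun s : ℝ => -(β * Real.exp (-(mu * (u + t * s)))))
          (β * (mu * t) * Real.exp (-(mu * (u + t * s)))) s := by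
        have ha : HasDerivAt (fun s : ℝ => -(mu * (u + t * s))) (-(mu * t)) s := by
          have := (((hasDerivAt_id s).const_mul t).const_add u).const_mul mu
          exact this.neg.congr_deriv (by ring)
        have := (ha.exp.const_mul β).neg
        exact this.congr_deriv (by ring)
      simpa using hi.exp
    have := (h1.mul h2).neg
    exact this.congr_deriv (by rw [← hβa]; ring)
  have hint : IntegrableOn (fun s => lam * Real.exp (-(lam * s)) *
      ((1 - Real.exp (-(mu * (u + t * s)))) *
        Real.exp (-(β * Real.exp (-(mu * (u + t * s))))))) (Ioi (0:ℝ)) := by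
    refine integrableAux hlam ht
      (φ := fun v => (1 - Real.exp (-(mu * v))) * Real.exp (-(β * Real.exp (-(mu * v)))))
      ?_ (C := 1) ?_ hu
    · exact (measurable_const.sub ((measurable_id.const_mul mu).neg.exp)).mul
        (((measurable_id.const_mul mu).neg.exp.const_mul β).neg.exp)
    · intro v hv
      have h01 : 0 < Real.exp (-(mu * v)) := Real.exp_pos _
      have h1 : Real.exp (-(mu * v)) ≤ 1 :=
        Real.exp_le_one_iff.mpr (neg_nonpos.mpr (by positivity))
      have h2 : Real.exp (-(β * Real.exp (-(mu * v)))) ≤ 1 :=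
        Real.exp_le_one_iff.mpr (neg_nonpos.mpr (by positivity))
      show |(1 - Real.exp (-(mu * v))) * Real.exp (-(β * Real.exp (-(mu * v))))| ≤ 1
      have h3 : (0:ℝ) ≤ (1 - Real.exp (-(mu * v))) * Real.exp (-(β * Real.exp (-(mu * v)))) :=
        mul_nonneg (by linarith) (Real.exp_pos _).le
      rw [abs_of_nonneg h3]
      nlinarith [Real.exp_pos (-(β * Real.exp (-(mu * v))))]
  have htend : Tendsto F atTop (𝓝 0) := by
    have hb : ∀ s : ℝ, ‖F s‖ ≤ Real.exp (-(lam * s)) := by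
      intro s
      have h2 : Real.exp (-(β * Real.exp (-(mu * (u + t * s))))) ≤ 1 :=
        Real.exp_le_one_iff.mpr (neg_nonpos.mpr (by positivity))
      have := Real.exp_pos (-(lam * s))
      rw [hF, norm_neg, Real.norm_eq_abs, abs_of_nonneg (by positivity)]
      nlinarith [Real.exp_pos (-(β * Real.exp (-(mu * (u + t * s)))))]
    have he : Tendsto (fun s : ℝ => Real.exp (-(lam * s))) atTop (𝓝 0) := by
      exact Real.tendsto_exp_atBot.comp
        (tendsto_neg_atTop_atBot.comp (tendsto_id.const_mul_atTop hlam))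
    exact squeeze_zero_norm hb he
  have := integral_Ioi_of_hasDerivAt_of_tendsto' (a := 0) (fun s _ => hderiv s) hint htend
  rw [this, hF]
  simp

/-- FTC identity B. -/
lemma intB {lam c : ℝ} (hlam : 0 < lam) (hc : 0 < c) :
    ∫ s in Ioi (0:ℝ), lam * (Real.exp (-(lam * s)) * Real.exp (-(c * s)))
      = lam / (lam + c) := by
  have hlc : 0 < lam + c := by linarith
  set F : ℝ → ℝ := fun s => -(lam / (lam + c)) * Real.exp (-((lam + c) * s)) with hF
  have hderiv : ∀ s : ℝ, HasDerivAt F (lam * (Real.exp (-(lam * s)) * Real.exp (-(c * s)))) s := by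
    intro s
    have h1 : HasDerivAt (fun s : ℝ => Real.exp (-((lam + c) * s)))
        (-(lam + c) * Real.exp (-((lam + c) * s))) s := by
      have := ((hasDerivAt_id s).const_mul (lam + c)).neg.exp
      simpa [mul_comm] using this
    have := h1.const_mul (-(lam / (lam + c)))
    refine this.congr_deriv ?_
    rw [← Real.exp_add, show -(lam * s) + -(c * s) = -((lam + c) * s) by ring]
    field_simp
  have hint : IntegrableOn (fun s => lam * (Real.exp (-(lam * s)) * Real.exp (-(c * s)))) (Ioi (0:ℝ)) := by
    have : IntegrableOn (fun s => lam * Real.exp (-(lam + c) * s)) (Ioi (0:ℝ)) :=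
      (exp_neg_integrableOn_Ioi 0 hlc).const_mul lam
    refine this.congr_fun (fun s _ => ?_) measurableSet_Ioi
    rw [← Real.exp_add]
    congr 2
    ring
  have htend : Tendsto F atTop (𝓝 0) := by
    have he : Tendsto (fun s : ℝ => Real.exp (-((lam + c) * s))) atTop (𝓝 0) := by
      exact Real.tendsto_exp_atBot.comp
        (tendsto_neg_atTop_atBot.comp (tendsto_id.const_mul_atTop hlc))
    simpa only [hF, neg_mul, neg_zero, mul_zero] using he.const_mul (-(lam / (lam + c)))
  have := integral_Ioi_of_hasDerivAt_of_tendsto' (a := 0) (fun s _ => hderiv s) hint htend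
  rw [this, hF]
  simp

/-- FTC identity C. -/
lemma intC {lam : ℝ} (hlam : 0 < lam) :
    ∫ s in Ioi (0:ℝ), lam * Real.exp (-(lam * s)) = 1 := by
  set F : ℝ → ℝ := fun s => -Real.exp (-(lam * s)) with hF
  have hderiv : ∀ s : ℝ, HasDerivAt F (lam * Real.exp (-(lam * s))) s := by
    intro s
    have h1 : HasDerivAt (fun s : ℝ => Real.exp (-(lam * s))) (-lam * Real.exp (-(lam * s))) s := by
      have := ((hasDerivAt_id s).const_mul lam).neg.exp
      simpa [mul_comm] using this
    have := h1.neg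
    exact this.congr_deriv (by ring)
  have hint : IntegrableOn (fun s => lam * Real.exp (-(lam * s))) (Ioi (0:ℝ)) := by
    have : IntegrableOn (fun s => lam * Real.exp (-lam * s)) (Ioi (0:ℝ)) :=
      (exp_neg_integrableOn_Ioi 0 hlam).const_mul lam
    simpa [neg_mul] using this
  have htend : Tendsto F atTop (𝓝 0) := by
    have he : Tendsto (fun s : ℝ => Real.exp (-(lam * s))) atTop (𝓝 0) := by
      exact Real.tendsto_exp_atBot.comp
        (tendsto_neg_atTop_atBot.comp (tendsto_id.const_mul_atTop hlam))
    simpa using he.neg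
  have := integral_Ioi_of_hasDerivAt_of_tendsto' (a := 0) (fun s _ => hderiv s) hint htend
  rw [this, hF]
  simp

noncomputable def G (lam mu t : ℝ) : ℕ → ℝ → ℝ
  | 0 => fun _ => 1
  | n + 1 => fun u => ∫ s in Set.Ioi (0:ℝ),
      lam * Real.exp (-(lam * s)) *
        ((1 - Real.exp (-(mu * (u + t * s)))) * G lam mu t n (u + t * s))

lemma measurable_G (lam mu t : ℝ) : ∀ n, Measurable (G lam mu t n)
  | 0 => measurable_const
  | n + 1 => by
    have hm : StronglyMeasurable (Function.uncurry fun (u s : ℝ) =>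
        lam * Real.exp (-(lam * s)) *
          ((1 - Real.exp (-(mu * (u + t * s)))) * G lam mu t n (u + t * s))) := by
      apply Measurable.stronglyMeasurable
      have haff : Measurable fun p : ℝ × ℝ => p.1 + t * p.2 :=
        measurable_fst.add (measurable_snd.const_mul t)
      exact (measurable_const.mul ((measurable_snd.const_mul lam).neg.exp)).mul
        ((measurable_const.sub ((haff.const_mul mu).neg.exp)).mul
          ((measurable_G lam mu t n).comp haff))
    exact (hm.integral_prod_right' (ν := volume.restrict (Set.Ioi (0:ℝ)))).measurable

lemma G_bounds {lam mu t : ℝ} (hlam : 0 < lam) (hmu : 0 < mu) (ht : 0 < t) :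
    ∀ n, ∀ u : ℝ, 0 ≤ u → 0 ≤ G lam mu t n u ∧ G lam mu t n u ≤ 1 := by
  intro n
  induction n with
  | zero => intro u hu; simp [G]
  | succ n ih =>
    intro u hu
    have hφm : Measurable fun v => (1 - Real.exp (-(mu * v))) * G lam mu t n v :=
      (measurable_const.sub ((measurable_id.const_mul mu).neg.exp)).mul (measurable_G lam mu t n)
    have hφb : ∀ v, 0 ≤ v → |(1 - Real.exp (-(mu * v))) * G lam mu t n v| ≤ 1 := by
      intro v hv
      have h1 : Real.exp (-(mu * v)) ≤ 1 :=
        Real.exp_le_one_iff.mpr (neg_nonpos.mpr (by positivity))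
      have h2 := (ih v hv).1
      have h3 := (ih v hv).2
      rw [abs_of_nonneg (mul_nonneg (by linarith) h2)]
      nlinarith [Real.exp_pos (-(mu * v))]
    have hint : IntegrableOn (fun s => lam * Real.exp (-(lam * s)) *
        ((1 - Real.exp (-(mu * (u + t * s)))) * G lam mu t n (u + t * s))) (Ioi (0:ℝ)) :=
      integrableAux hlam ht hφm hφb hu
    constructor
    · show (0:ℝ) ≤ ∫ s in Ioi (0:ℝ), _
      apply setIntegral_nonneg measurableSet_Ioi
      intro s hs
      have hv : 0 ≤ u + t * s := by nlinarith [(mem_Ioi.mp hs).le]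
      have h1 : Real.exp (-(mu * (u + t * s))) ≤ 1 :=
        Real.exp_le_one_iff.mpr (neg_nonpos.mpr (by positivity))
      have h2 := (ih _ hv).1
      exact mul_nonneg (by positivity) (mul_nonneg (by linarith) h2)
    · show (∫ s in Ioi (0:ℝ), _) ≤ (1:ℝ)
      have hle : ∀ s ∈ Ioi (0:ℝ), lam * Real.exp (-(lam * s)) *
          ((1 - Real.exp (-(mu * (u + t * s)))) * G lam mu t n (u + t * s))
          ≤ lam * Real.exp (-(lam * s)) := by
        intro s hs
        have hv : 0 ≤ u + t * s := by nlinarith [(mem_Ioi.mp hs).le]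
        have hb := hφb _ hv
        rw [abs_le] at hb
        have := mul_le_mul_of_nonneg_left hb.2
          (by positivity : (0:ℝ) ≤ lam * Real.exp (-(lam * s)))
        simpa using this
      calc (∫ s in Ioi (0:ℝ), lam * Real.exp (-(lam * s)) *
            ((1 - Real.exp (-(mu * (u + t * s)))) * G lam mu t n (u + t * s)))
          ≤ ∫ s in Ioi (0:ℝ), lam * Real.exp (-(lam * s)) := by
            apply setIntegral_mono_on hint ?_ measurableSet_Ioi hle
            simpa [neg_mul, IntegrableOn] using (exp_neg_integrableOn_Ioi 0 hlam).const_mul lam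
        _ = 1 := intC hlam

lemma G_squeeze {lam mu t : ℝ} (hlam : 0 < lam) (hmu : 0 < mu) (ht : 0 < t) :
    ∀ n, ∀ u : ℝ, 0 ≤ u →
      Real.exp (-(lam / (mu * t) * Real.exp (-(mu * u)))) ≤ G lam mu t n u ∧
      G lam mu t n u ≤ Real.exp (-(lam / (mu * t) * Real.exp (-(mu * u))))
        + lam / (mu * t) * Real.exp (-(mu * u)) * (lam / (lam + mu * t)) ^ n := by
  intro n
  induction n with
  | zero =>
    intro u hu
    constructor
    · simp only [G]
      exact Real.exp_le_one_iff.mpr (neg_nonpos.mpr (by positivity))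
    · simp only [G, pow_zero, mul_one]
      have := Real.add_one_le_exp (-(lam / (mu * t) * Real.exp (-(mu * u))))
      linarith
  | succ n ih =>
    intro u hu
    have hmt : 0 < mu * t := by positivity
    -- abbreviations
    set β := lam / (mu * t) with hβ
    have hβ0 : 0 ≤ β := by positivity
    set ρ := lam / (lam + mu * t) with hρ
    have hρ0 : 0 ≤ ρ := by positivity
    -- integrability of the main integrand
    have hφm : Measurable fun v => (1 - Real.exp (-(mu * v))) * G lam mu t n v :=
      (measurable_const.sub ((measurable_id.const_mul mu).neg.exp)).mul (measurable_G lam mu t n)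
    have hφb : ∀ v, 0 ≤ v → |(1 - Real.exp (-(mu * v))) * G lam mu t n v| ≤ 1 := by
      intro v hv
      have h1 : Real.exp (-(mu * v)) ≤ 1 :=
        Real.exp_le_one_iff.mpr (neg_nonpos.mpr (by positivity))
      have h2 := (G_bounds hlam hmu ht n v hv).1
      have h3 := (G_bounds hlam hmu ht n v hv).2
      rw [abs_of_nonneg (mul_nonneg (by linarith) h2)]
      nlinarith [Real.exp_pos (-(mu * v))]
    have hint : IntegrableOn (fun s => lam * Real.exp (-(lam * s)) *
        ((1 - Real.exp (-(mu * (u + t * s)))) * G lam mu t n (u + t * s))) (Ioi (0:ℝ)) :=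
      integrableAux hlam ht hφm hφb hu
    -- integrability of the fstar integrand
    have hfm : Measurable fun v => (1 - Real.exp (-(mu * v))) *
        Real.exp (-(β * Real.exp (-(mu * v)))) :=
      (measurable_const.sub ((measurable_id.const_mul mu).neg.exp)).mul
        (((measurable_id.const_mul mu).neg.exp.const_mul β).neg.exp)
    have hfb : ∀ v, 0 ≤ v → |(1 - Real.exp (-(mu * v))) *
        Real.exp (-(β * Real.exp (-(mu * v))))| ≤ 1 := by
      intro v hv
      have h1 : Real.exp (-(mu * v)) ≤ 1 :=
        Real.exp_le_one_iff.mpr (neg_nonpos.mpr (by positivity))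
      have h2 : Real.exp (-(β * Real.exp (-(mu * v)))) ≤ 1 :=
        Real.exp_le_one_iff.mpr (neg_nonpos.mpr (by positivity))
      rw [abs_of_nonneg (mul_nonneg (by linarith [Real.exp_pos (-(mu * v))])
        (Real.exp_pos _).le)]
      have h4 : (1 - Real.exp (-(mu * v))) * Real.exp (-(β * Real.exp (-(mu * v)))) ≤ 1 * 1 :=
        mul_le_mul (by linarith [Real.exp_pos (-(mu * v))]) h2 (Real.exp_pos _).le one_pos.le
      linarith
    have hintf : IntegrableOn (fun s => lam * Real.exp (-(lam * s)) *
        ((1 - Real.exp (-(mu * (u + t * s)))) *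
          Real.exp (-(β * Real.exp (-(mu * (u + t * s))))))) (Ioi (0:ℝ)) :=
      integrableAux hlam ht hfm hfb hu
    -- integrability of the exponential tail term
    have hint2 : IntegrableOn (fun s => Real.exp (-(mu * u)) * β * ρ ^ n *
        (lam * (Real.exp (-(lam * s)) * Real.exp (-(mu * t * s))))) (Ioi (0:ℝ)) := by
      apply Integrable.const_mul
      have : IntegrableOn (fun s => lam * Real.exp (-(lam + mu * t) * s)) (Ioi (0:ℝ)) :=
        (exp_neg_integrableOn_Ioi 0 (by positivity)).const_mul lam
      refine this.congr_fun (fun s _ => ?_) measurableSet_Ioi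
      rw [← Real.exp_add]
      congr 2
      ring
    constructor
    · -- lower bound
      rw [show G lam mu t (n+1) u = ∫ s in Ioi (0:ℝ),
          lam * Real.exp (-(lam * s)) *
            ((1 - Real.exp (-(mu * (u + t * s)))) * G lam mu t n (u + t * s)) from rfl]
      rw [← intA hlam hmu ht hu]
      apply setIntegral_mono_on hintf hint measurableSet_Ioi
      intro s hs
      have hv : 0 ≤ u + t * s := by nlinarith [(mem_Ioi.mp hs).le]
      have h1 : Real.exp (-(mu * (u + t * s))) ≤ 1 :=
        Real.exp_le_one_iff.mpr (neg_nonpos.mpr (by positivity))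
      have hlow := (ih _ hv).1
      exact mul_le_mul_of_nonneg_left
        (mul_le_mul_of_nonneg_left hlow (by linarith [Real.exp_pos (-(mu * (u + t * s)))]))
        (by positivity)
    · -- upper bound
      rw [show G lam mu t (n+1) u = ∫ s in Ioi (0:ℝ),
          lam * Real.exp (-(lam * s)) *
            ((1 - Real.exp (-(mu * (u + t * s)))) * G lam mu t n (u + t * s)) from rfl]
      have step1 : (∫ s in Ioi (0:ℝ), lam * Real.exp (-(lam * s)) *
            ((1 - Real.exp (-(mu * (u + t * s)))) * G lam mu t n (u + t * s)))
          ≤ ∫ s in Ioi (0:ℝ), (lam * Real.exp (-(lam * s)) *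
              ((1 - Real.exp (-(mu * (u + t * s)))) *
                Real.exp (-(β * Real.exp (-(mu * (u + t * s)))))) +
            Real.exp (-(mu * u)) * β * ρ ^ n *
              (lam * (Real.exp (-(lam * s)) * Real.exp (-(mu * t * s))))) := by
        apply setIntegral_mono_on hint (hintf.add hint2) measurableSet_Ioi
        intro s hs
        have hs0 := (mem_Ioi.mp hs).le
        have hv : 0 ≤ u + t * s := by nlinarith
        have h1 : Real.exp (-(mu * (u + t * s))) ≤ 1 :=
          Real.exp_le_one_iff.mpr (neg_nonpos.mpr (by positivity))
        have hup := (ih _ hv).2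
        have hsplit : Real.exp (-(mu * (u + t * s)))
            = Real.exp (-(mu * u)) * Real.exp (-(mu * t * s)) := by
          rw [← Real.exp_add]; congr 1; ring
        have he1 := Real.exp_pos (-(lam * s))
        have he2 := Real.exp_pos (-(mu * (u + t * s)))
        -- (1-E) * Gn ≤ (1-E) * fstar + β E ρ^n
        have key : (1 - Real.exp (-(mu * (u + t * s)))) * G lam mu t n (u + t * s)
            ≤ (1 - Real.exp (-(mu * (u + t * s)))) *
                Real.exp (-(β * Real.exp (-(mu * (u + t * s)))))
              + β * Real.exp (-(mu * (u + t * s))) * ρ ^ n := by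
          have hρn : 0 ≤ ρ ^ n := pow_nonneg hρ0 n
          have hA := mul_le_mul_of_nonneg_left hup (by linarith :
            (0:ℝ) ≤ 1 - Real.exp (-(mu * (u + t * s))))
          have h0 : 0 ≤ β * Real.exp (-(mu * (u + t * s))) * ρ ^ n := by positivity
          nlinarith [hA, h0]
        calc lam * Real.exp (-(lam * s)) *
              ((1 - Real.exp (-(mu * (u + t * s)))) * G lam mu t n (u + t * s))
            ≤ lam * Real.exp (-(lam * s)) *
              ((1 - Real.exp (-(mu * (u + t * s)))) *
                Real.exp (-(β * Real.exp (-(mu * (u + t * s)))))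
               + β * Real.exp (-(mu * (u + t * s))) * ρ ^ n) :=
              mul_le_mul_of_nonneg_left key (by positivity)
          _ = lam * Real.exp (-(lam * s)) *
              ((1 - Real.exp (-(mu * (u + t * s)))) *
                Real.exp (-(β * Real.exp (-(mu * (u + t * s)))))) +
              Real.exp (-(mu * u)) * β * ρ ^ n *
                (lam * (Real.exp (-(lam * s)) * Real.exp (-(mu * t * s)))) := by
              rw [hsplit]; ring
      rw [integral_add hintf hint2, intA hlam hmu ht hu,
        MeasureTheory.integral_const_mul, intB hlam (by positivity)] at step1
      have hρsucc : Real.exp (-(mu * u)) * β * ρ ^ n * (lam / (lam + mu * t))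
          = β * Real.exp (-(mu * u)) * ρ ^ (n + 1) := by
        rw [hρ]; ring
      rw [hρsucc] at step1
      exact step1

lemma map_eq_withDensity {Ω : Type*} [MeasurableSpace Ω] (P : Measure Ω) [IsProbabilityMeasure P]
    {r : ℝ} (hr : 0 < r) {X : Ω → ℝ} (hX : Measurable X)
    (hcdf : ∀ s : ℝ, 0 ≤ s → P {ω | X ω ≤ s} = ENNReal.ofReal (1 - Real.exp (-(r * s)))) :
    P.map X = volume.withDensity (exponentialPDF r) := by
  haveI : IsProbabilityMeasure (P.map X) := Measure.isProbabilityMeasure_map hX.aemeasurable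
  refine Measure.ext_of_Iic _ _ (fun s => ?_)
  rw [Measure.map_apply hX measurableSet_Iic, withDensity_apply _ measurableSet_Iic]
  rw [lintegral_exponentialPDF_eq_antiDeriv hr s]
  by_cases hs : 0 ≤ s
  · rw [if_pos hs]; exact hcdf s hs
  · rw [if_neg hs]
    have h0 : P {ω | X ω ≤ 0} = 0 := by
      have := hcdf 0 le_rfl
      simpa using this
    have hsub : X ⁻¹' Iic s ⊆ {ω | X ω ≤ 0} := fun ω hω =>
      le_trans (mem_preimage.mp hω : X ω ≤ s) (le_of_not_ge hs)
    simpa using le_antisymm (le_trans (measure_mono hsub) h0.le) zero_le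

lemma lintegral_map_exp {Ω : Type*} [MeasurableSpace Ω] (P : Measure Ω) [IsProbabilityMeasure P]
    {r : ℝ} (hr : 0 < r) {X : Ω → ℝ} (hX : Measurable X)
    (hcdf : ∀ s : ℝ, 0 ≤ s → P {ω | X ω ≤ s} = ENNReal.ofReal (1 - Real.exp (-(r * s))))
    (f : ℝ → ℝ≥0∞) (hf : Measurable f) :
    ∫⁻ v, f v ∂(P.map X)
      = ∫⁻ s in Ioi (0:ℝ), ENNReal.ofReal (r * Real.exp (-(r * s))) * f s := by
  rw [map_eq_withDensity P hr hX hcdf,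
    lintegral_withDensity_eq_lintegral_mul _
      (show Measurable (exponentialPDF r) from (measurable_exponentialPDFReal r).ennreal_ofReal) hf]
  simp only [Pi.mul_apply]
  rw [← lintegral_add_compl (fun a => exponentialPDF r a * f a)
    (measurableSet_Ioi (a := (0:ℝ))) (μ := volume)]
  have hz : ∫⁻ a in (Ioi (0:ℝ))ᶜ, exponentialPDF r a * f a = 0 := by
    rw [compl_Ioi, ← Measure.restrict_congr_set Iio_ae_eq_Iic,
      setLIntegral_congr_fun measurableSet_Iio (fun ⦃a⦄ (ha : a < 0) => by
        rw [exponentialPDF_of_neg ha, zero_mul])]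
    simp
  rw [hz, add_zero]
  refine setLIntegral_congr_fun measurableSet_Ioi (fun ⦃a⦄ ha => ?_)
  rw [exponentialPDF_of_nonneg (le_of_lt ha)]

end BlockageAux

open BlockageAux

/-- for a homogeneous PPP on ℝ with intensity λ and i.i.d. Exp(μ)
marks, for an observer at (x, h) with h ≥ 0 the points of the process to the
right of x are x + S_i with S_i partial sums of i.i.d. Exp(λ) gaps, and
P[sup_{x_i > x} (h_i − h)₊/(x_i − x) ≤ t] = exp(−(λ/(μt))·e^{−μh}),
independently of x. -/
theorem blockage_tangent_elevated_observer
    {Ω : Type*} [MeasurableSpace Ω] (P : Measure Ω) [IsProbabilityMeasure P]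
    (lam mu : ℝ) (hlam : 0 < lam) (hmu : 0 < mu)
    (x h0 : ℝ) (hh0 : 0 ≤ h0)
    (g h : ℕ → Ω → ℝ)
    (hgm : ∀ i, Measurable (g i)) (hhm : ∀ i, Measurable (h i))
    (hindep : iIndepFun (Sum.elim g h) P)
    (hgd : ∀ i, ∀ s : ℝ, 0 ≤ s →
      P {ω | g i ω ≤ s} = ENNReal.ofReal (1 - Real.exp (-(lam * s))))
    (hhd : ∀ i, ∀ s : ℝ, 0 ≤ s →
      P {ω | h i ω ≤ s} = ENNReal.ofReal (1 - Real.exp (-(mu * s))))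
    -- the points of the PPP to the right of x
    (xs : ℕ → Ω → ℝ)
    (hxs : ∀ i ω, xs i ω = x + ∑ j ∈ Finset.range (i + 1), g j ω)
    (t : ℝ) (ht : 0 < t) :
    P {ω | ∀ i, max (h i ω - h0) 0 / (xs i ω - x) ≤ t}
      = ENNReal.ofReal (Real.exp (-(lam / (mu * t)) * Real.exp (-(mu * h0)))) := by
  classical
  -- the nested events
  set Ev : ℕ → ℕ → ℝ → Set Ω := fun m n u =>
    {ω | ∀ i < n, h (m + i) ω ≤ u + t * ∑ j ∈ Finset.range (i + 1), g (m + j) ω} with hEv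
  -- the key identity
  have key : ∀ n m (u : ℝ), 0 ≤ u → P (Ev m n u) = ENNReal.ofReal (G lam mu t n u) := by
    intro n
    induction n with
    | zero =>
      intro m u hu
      have : Ev m 0 u = univ := Set.eq_univ_iff_forall.mpr fun ω i hi =>
        absurd hi (Nat.not_lt_zero i)
      rw [this, measure_univ]
      simp [G]
    | succ n ih =>
      intro m u hu
      -- the two blocks of random variables
      set X : Ω → ℝ × ℝ := fun ω => (g m ω, h m ω) with hXdef
      set R : Ω → (ℕ → ℝ) × (ℕ → ℝ) := fun ω =>
        ((fun j => if hj : j < n then g (m + 1 + j) ω else 0),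
         (fun j => if hj : j < n then h (m + 1 + j) ω else 0)) with hRdef
      have hXm : Measurable X := (hgm m).prodMk (hhm m)
      have hRm : Measurable R := by
        refine Measurable.prodMk (measurable_pi_lambda _ fun j => ?_)
          (measurable_pi_lambda _ fun j => ?_)
        · by_cases hj : j < n
          · simpa only [dif_pos hj] using hgm (m + 1 + j)
          · simpa only [dif_neg hj] using measurable_const
        · by_cases hj : j < n
          · simpa only [dif_pos hj] using hhm (m + 1 + j)
          · simpa only [dif_neg hj] using measurable_const
      -- the product-space event
      set C : Set ((ℝ × ℝ) × ((ℕ → ℝ) × (ℕ → ℝ))) :=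
        {p | p.1.2 ≤ u + t * p.1.1 ∧ ∀ i < n,
          p.2.2 i ≤ (u + t * p.1.1) + t * ∑ j ∈ Finset.range (i + 1), p.2.1 j} with hCdef
      have hCmeas : MeasurableSet C := by
        have h1 : MeasurableSet {p : (ℝ × ℝ) × ((ℕ → ℝ) × (ℕ → ℝ)) |
            p.1.2 ≤ u + t * p.1.1} :=
          measurableSet_le measurable_fst.snd
            (measurable_const.add (measurable_fst.fst.const_mul t))
        have h2 : ∀ i, MeasurableSet {p : (ℝ × ℝ) × ((ℕ → ℝ) × (ℕ → ℝ)) |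
            p.2.2 i ≤ (u + t * p.1.1) + t * ∑ j ∈ Finset.range (i + 1), p.2.1 j} := fun i =>
          measurableSet_le (measurable_snd.snd.eval)
            ((measurable_const.add (measurable_fst.fst.const_mul t)).add
              ((Finset.measurable_sum (Finset.range (i + 1))
                (f := fun j (p : (ℝ × ℝ) × ((ℕ → ℝ) × (ℕ → ℝ))) => p.2.1 j)
                (fun j _ => by exact measurable_snd.fst.eval)).const_mul t))
        have hCeq : C = {p : (ℝ × ℝ) × ((ℕ → ℝ) × (ℕ → ℝ)) | p.1.2 ≤ u + t * p.1.1}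
            ∩ ⋂ i, ⋂ (_ : i < n), {p : (ℝ × ℝ) × ((ℕ → ℝ) × (ℕ → ℝ)) |
              p.2.2 i ≤ (u + t * p.1.1) + t * ∑ j ∈ Finset.range (i + 1), p.2.1 j} := by
          ext p
          simp [hCdef, mem_iInter, mem_setOf_eq]
        rw [hCeq]
        exact h1.inter (MeasurableSet.iInter fun i => MeasurableSet.iInter fun _ => h2 i)
      -- the event as a preimage
      have hpre : Ev m (n + 1) u = (fun ω => (X ω, R ω)) ⁻¹' C := by
        ext ω
        simp only [hEv, hCdef, hXdef, hRdef, mem_setOf_eq, mem_preimage]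
        constructor
        · intro H
          refine ⟨?_, ?_⟩
          · have h0' := H 0 (Nat.succ_pos n)
            simpa using h0'
          · intro i hi
            have hI := H (i + 1) (Nat.succ_lt_succ hi)
            rw [show m + (i + 1) = m + 1 + i from by omega] at hI
            rw [Finset.sum_range_succ'] at hI
            rw [dif_pos hi]
            have hsum : ∑ j ∈ Finset.range (i + 1),
                (if hj : j < n then g (m + 1 + j) ω else 0)
                = ∑ j ∈ Finset.range (i + 1), g (m + (j + 1)) ω := by
              refine Finset.sum_congr rfl fun j hj => ?_
              have hjn : j < n := by have := Finset.mem_range.mp hj; omega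
              rw [dif_pos hjn, show m + 1 + j = m + (j + 1) from by omega]
            rw [hsum]
            simp only [Nat.add_zero] at hI
            linarith
        · rintro ⟨H0, H⟩ i hi
          rcases Nat.eq_zero_or_pos i with rfl | hipos
          · simpa using H0
          · obtain ⟨i', rfl⟩ := Nat.exists_eq_succ_of_ne_zero (Nat.pos_iff_ne_zero.mp hipos)
            have hi' : i' < n := by omega
            have hI := H i' hi'
            rw [dif_pos hi'] at hI
            rw [show m + (i' + 1) = m + 1 + i' from by omega, Finset.sum_range_succ']
            have hsum : ∑ j ∈ Finset.range (i' + 1),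
                (if hj : j < n then g (m + 1 + j) ω else 0)
                = ∑ j ∈ Finset.range (i' + 1), g (m + (j + 1)) ω := by
              refine Finset.sum_congr rfl fun j hj => ?_
              have hjn : j < n := by have := Finset.mem_range.mp hj; omega
              rw [dif_pos hjn, show m + 1 + j = m + (j + 1) from by omega]
            rw [hsum] at hI
            simp only [Nat.add_zero]
            linarith
      -- independence of the two blocks
      have hfm : ∀ i : ℕ ⊕ ℕ, Measurable (Sum.elim g h i) := by
        rintro (i | i)
        exacts [hgm i, hhm i]
      have hmemS1 : (Sum.inl m : ℕ ⊕ ℕ) ∈ ({Sum.inl m, Sum.inr m} : Finset (ℕ ⊕ ℕ)) := by simp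
      have hmemS2 : (Sum.inr m : ℕ ⊕ ℕ) ∈ ({Sum.inl m, Sum.inr m} : Finset (ℕ ⊕ ℕ)) := by simp
      set T : Finset (ℕ ⊕ ℕ) :=
        ((Finset.range n).image fun j => Sum.inl (m + 1 + j)) ∪
        ((Finset.range n).image fun j => Sum.inr (m + 1 + j)) with hTdef
      have hmemT1 : ∀ {j : ℕ}, j < n → (Sum.inl (m + 1 + j) : ℕ ⊕ ℕ) ∈ T := fun {j} hj =>
        Finset.mem_union_left _ (Finset.mem_image.mpr ⟨j, Finset.mem_range.mpr hj, rfl⟩)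
      have hmemT2 : ∀ {j : ℕ}, j < n → (Sum.inr (m + 1 + j) : ℕ ⊕ ℕ) ∈ T := fun {j} hj =>
        Finset.mem_union_right _ (Finset.mem_image.mpr ⟨j, Finset.mem_range.mpr hj, rfl⟩)
      have hST : Disjoint ({Sum.inl m, Sum.inr m} : Finset (ℕ ⊕ ℕ)) T := by
        rw [Finset.disjoint_left]
        rintro a ha hb
        simp only [Finset.mem_insert, Finset.mem_singleton] at ha
        simp only [hTdef, Finset.mem_union, Finset.mem_image, Finset.mem_range] at hb
        rcases ha with rfl | rfl <;>
          rcases hb with ⟨j, hj, hja⟩ | ⟨j, hj, hja⟩ <;> simp_all <;> omega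
      have hbase := hindep.indepFun_finset {Sum.inl m, Sum.inr m} T hST hfm
      have hφSm : Measurable fun v : ((i : ({Sum.inl m, Sum.inr m} : Finset (ℕ ⊕ ℕ))) → ℝ) =>
          (v ⟨Sum.inl m, hmemS1⟩, v ⟨Sum.inr m, hmemS2⟩) :=
        (measurable_pi_apply _).prodMk (measurable_pi_apply _)
      have hφTm : Measurable fun v : ((i : T) → ℝ) =>
          ((fun j => if hj : j < n then v ⟨Sum.inl (m + 1 + j), hmemT1 hj⟩ else 0),
           (fun j => if hj : j < n then v ⟨Sum.inr (m + 1 + j), hmemT2 hj⟩ else 0)) := by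
        refine Measurable.prodMk (measurable_pi_lambda _ fun j => ?_)
          (measurable_pi_lambda _ fun j => ?_)
        · by_cases hj : j < n
          · simpa only [dif_pos hj] using measurable_pi_apply _
          · simpa only [dif_neg hj] using measurable_const
        · by_cases hj : j < n
          · simpa only [dif_pos hj] using measurable_pi_apply _
          · simpa only [dif_neg hj] using measurable_const
      have hIndepXR : IndepFun X R P := hbase.comp hφSm hφTm
      haveI hPX : IsProbabilityMeasure (P.map X) := Measure.isProbabilityMeasure_map hXm.aemeasurable
      haveI hPR : IsProbabilityMeasure (P.map R) := Measure.isProbabilityMeasure_map hRm.aemeasurable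
      haveI : IsProbabilityMeasure (P.map (g m)) := Measure.isProbabilityMeasure_map (hgm m).aemeasurable
      haveI : IsProbabilityMeasure (P.map (h m)) := Measure.isProbabilityMeasure_map (hhm m).aemeasurable
      have hmapPair : P.map (fun ω => (X ω, R ω)) = (P.map X).prod (P.map R) :=
        (indepFun_iff_map_prod_eq_prod_map_map hXm.aemeasurable hRm.aemeasurable).mp hIndepXR
      have hgh : IndepFun (g m) (h m) P :=
        hindep.indepFun (by simp : (Sum.inl m : ℕ ⊕ ℕ) ≠ Sum.inr m)
      have hmapX : P.map X = (P.map (g m)).prod (P.map (h m)) :=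
        (indepFun_iff_map_prod_eq_prod_map_map (hgm m).aemeasurable (hhm m).aemeasurable).mp hgh
      -- inner sets
      set D : ℝ → Set ((ℕ → ℝ) × (ℕ → ℝ)) := fun v =>
        {q | ∀ i < n, q.2 i ≤ v + t * ∑ j ∈ Finset.range (i + 1), q.1 j} with hDdef
      have hC2meas : MeasurableSet {p : ℝ × ((ℕ → ℝ) × (ℕ → ℝ)) |
          ∀ i < n, p.2.2 i ≤ p.1 + t * ∑ j ∈ Finset.range (i + 1), p.2.1 j} := by
        have h2 : ∀ i, MeasurableSet {p : ℝ × ((ℕ → ℝ) × (ℕ → ℝ)) |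
            p.2.2 i ≤ p.1 + t * ∑ j ∈ Finset.range (i + 1), p.2.1 j} := fun i =>
          measurableSet_le (measurable_snd.snd.eval)
            (measurable_fst.add
              ((Finset.measurable_sum (Finset.range (i + 1))
                (f := fun j (p : ℝ × ((ℕ → ℝ) × (ℕ → ℝ))) => p.2.1 j)
                (fun j _ => by exact measurable_snd.fst.eval)).const_mul t))
        have heq : {p : ℝ × ((ℕ → ℝ) × (ℕ → ℝ)) |
            ∀ i < n, p.2.2 i ≤ p.1 + t * ∑ j ∈ Finset.range (i + 1), p.2.1 j}
            = ⋂ i, ⋂ (_ : i < n), {p : ℝ × ((ℕ → ℝ) × (ℕ → ℝ)) |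
              p.2.2 i ≤ p.1 + t * ∑ j ∈ Finset.range (i + 1), p.2.1 j} := by
          ext p
          simp [mem_iInter, mem_setOf_eq]
        rw [heq]
        exact MeasurableSet.iInter fun i => MeasurableSet.iInter fun _ => h2 i
      have hDmeas : ∀ v, MeasurableSet (D v) := fun v =>
        measurable_prodMk_left hC2meas
      have hDmeasfun : Measurable fun v : ℝ => (P.map R) (D v) :=
        measurable_measure_prodMk_left hC2meas
      -- slices of C
      have hslice : ∀ s y : ℝ, Prod.mk (s, y) ⁻¹' C
          = if y ≤ u + t * s then D (u + t * s) else ∅ := by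
        intro s y
        ext q
        by_cases hy : y ≤ u + t * s
        · simp [hCdef, hDdef, hy]
        · simp [hCdef, hDdef, hy]
      -- values of the pieces
      have hDval : ∀ v : ℝ, 0 ≤ v → (P.map R) (D v) = ENNReal.ofReal (G lam mu t n v) := by
        intro v hv
        rw [Measure.map_apply hRm (hDmeas v)]
        have hRD : R ⁻¹' D v = Ev (m + 1) n v := by
          ext ω
          simp only [hEv, hDdef, hRdef, mem_preimage, mem_setOf_eq]
          refine forall₂_congr fun i hi => ?_
          rw [dif_pos hi]
          have hsum : ∑ j ∈ Finset.range (i + 1),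
              (if hj : j < n then g (m + 1 + j) ω else 0)
              = ∑ j ∈ Finset.range (i + 1), g (m + 1 + j) ω :=
            Finset.sum_congr rfl fun j hj =>
              dif_pos (by have := Finset.mem_range.mp hj; omega)
          rw [hsum]
        rw [hRD]
        exact ih (m + 1) v hv
      have hhval : ∀ w : ℝ, 0 ≤ w →
          (P.map (h m)) (Iic w) = ENNReal.ofReal (1 - Real.exp (-(mu * w))) := by
        intro w hw
        rw [Measure.map_apply (hhm m) measurableSet_Iic]
        exact hhd m w hw
      -- the integrand
      set f : ℝ → ℝ≥0∞ := fun s =>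
        (P.map R) (D (u + t * s)) * (P.map (h m)) (Iic (u + t * s)) with hfdef
      have hmono : Monotone fun w : ℝ => (P.map (h m)) (Iic w) := fun w w' hww' =>
        measure_mono (Iic_subset_Iic.mpr hww')
      have haff : Measurable fun s : ℝ => u + t * s := (measurable_id.const_mul t).const_add u
      have hfmeas : Measurable f :=
        (hDmeasfun.comp haff).mul (hmono.measurable.comp haff)
      -- integrability of the real integrand
      have hφm2 : Measurable fun v => (1 - Real.exp (-(mu * v))) * G lam mu t n v :=
        (measurable_const.sub ((measurable_id.const_mul mu).neg.exp)).mul (measurable_G lam mu t n)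
      have hφb2 : ∀ v, 0 ≤ v → |(1 - Real.exp (-(mu * v))) * G lam mu t n v| ≤ 1 := by
        intro v hv
        have h1 : Real.exp (-(mu * v)) ≤ 1 :=
          Real.exp_le_one_iff.mpr (neg_nonpos.mpr (by positivity))
        have h2 := (G_bounds hlam hmu ht n v hv).1
        have h3 := (G_bounds hlam hmu ht n v hv).2
        rw [abs_of_nonneg (mul_nonneg (by linarith) h2)]
        nlinarith [Real.exp_pos (-(mu * v))]
      have hint : IntegrableOn (fun s => lam * Real.exp (-(lam * s)) *
          ((1 - Real.exp (-(mu * (u + t * s)))) * G lam mu t n (u + t * s))) (Ioi (0:ℝ)) :=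
        integrableAux hlam ht hφm2 hφb2 hu
      have hnn : 0 ≤ᵐ[volume.restrict (Ioi (0:ℝ))] fun s => lam * Real.exp (-(lam * s)) *
          ((1 - Real.exp (-(mu * (u + t * s)))) * G lam mu t n (u + t * s)) := by
        filter_upwards [self_mem_ae_restrict measurableSet_Ioi] with s hs
        have hv : 0 ≤ u + t * s := by nlinarith [(mem_Ioi.mp hs).le]
        have h1 : Real.exp (-(mu * (u + t * s))) ≤ 1 :=
          Real.exp_le_one_iff.mpr (neg_nonpos.mpr (by positivity))
        have h2 := (G_bounds hlam hmu ht n _ hv).1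
        exact mul_nonneg (by positivity) (mul_nonneg (by linarith) h2)
      -- main computation
      calc P (Ev m (n + 1) u)
          = (P.map (fun ω => (X ω, R ω))) C := by
            rw [hpre, Measure.map_apply (hXm.prodMk hRm) hCmeas]
        _ = ((P.map X).prod (P.map R)) C := by rw [hmapPair]
        _ = ∫⁻ p, (P.map R) (Prod.mk p ⁻¹' C) ∂(P.map X) := Measure.prod_apply hCmeas
        _ = ∫⁻ p, (P.map R) (Prod.mk p ⁻¹' C) ∂((P.map (g m)).prod (P.map (h m))) := by
            rw [hmapX]
        _ = ∫⁻ s, ∫⁻ y, (P.map R) (Prod.mk (s, y) ⁻¹' C) ∂(P.map (h m)) ∂(P.map (g m)) :=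
            lintegral_prod _ (measurable_measure_prodMk_left hCmeas).aemeasurable
        _ = ∫⁻ s, f s ∂(P.map (g m)) := by
            refine lintegral_congr fun s => ?_
            have hind : ∀ y : ℝ, (P.map R) (Prod.mk (s, y) ⁻¹' C)
                = (Iic (u + t * s)).indicator (fun _ => (P.map R) (D (u + t * s))) y := by
              intro y
              rw [hslice s y]
              by_cases hy : y ≤ u + t * s
              · rw [if_pos hy, Set.indicator_of_mem (mem_Iic.mpr hy)]
              · rw [if_neg hy, Set.indicator_of_notMem (fun hc => hy (mem_Iic.mp hc))]
                exact measure_empty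
            rw [lintegral_congr hind, lintegral_indicator_const measurableSet_Iic]
        _ = ∫⁻ s in Ioi (0:ℝ), ENNReal.ofReal (lam * Real.exp (-(lam * s))) * f s :=
            lintegral_map_exp P hlam (hgm m) (hgd m) f hfmeas
        _ = ∫⁻ s in Ioi (0:ℝ), ENNReal.ofReal (lam * Real.exp (-(lam * s)) *
              ((1 - Real.exp (-(mu * (u + t * s)))) * G lam mu t n (u + t * s))) := by
            refine setLIntegral_congr_fun measurableSet_Ioi (fun ⦃s⦄ hs => ?_)
            have hspos : (0:ℝ) < s := hs
            have hv : 0 ≤ u + t * s := by nlinarith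
            have hG0 := (G_bounds hlam hmu ht n _ hv).1
            have he1 : Real.exp (-(mu * (u + t * s))) ≤ 1 :=
              Real.exp_le_one_iff.mpr (neg_nonpos.mpr (by positivity))
            rw [hfdef]
            simp only []
            rw [hDval _ hv, hhval _ hv,
              ← ENNReal.ofReal_mul hG0, ← ENNReal.ofReal_mul (by positivity)]
            congr 1
            ring
        _ = ENNReal.ofReal (G lam mu t (n + 1) u) := by
            rw [show G lam mu t (n + 1) u = ∫ s in Ioi (0:ℝ),
                lam * Real.exp (-(lam * s)) *
                  ((1 - Real.exp (-(mu * (u + t * s)))) * G lam mu t n (u + t * s)) from rfl,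
              ofReal_integral_eq_lintegral_ofReal hint hnn]


  -- measurability of the events
  have hEvMeas : ∀ m n u, MeasurableSet (Ev m n u) := by
    intro m n u
    have : Ev m n u = ⋂ i, ⋂ (_ : i < n),
        {ω | h (m + i) ω ≤ u + t * ∑ j ∈ Finset.range (i + 1), g (m + j) ω} := by
      ext ω; simp [hEv, mem_iInter]
    rw [this]
    refine MeasurableSet.iInter fun i => MeasurableSet.iInter fun _ => ?_
    exact measurableSet_le (hhm _) (measurable_const.add
      ((Finset.measurable_sum _ fun j _ => hgm (m + j)).const_mul t))
  -- the null set where some gap is nonpositive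
  have hNnull : P (⋃ j, {ω | g j ω ≤ 0}) = 0 := by
    refine measure_iUnion_null fun j => ?_
    have := hgd j 0 le_rfl
    simpa using this
  -- identification of the target event with the intersection
  have hae : P {ω | ∀ i, max (h i ω - h0) 0 / (xs i ω - x) ≤ t} = P (⋂ n, Ev 0 n h0) := by
    refine measure_congr (Filter.eventuallyEq_set.mpr ?_)
    have hcompl : ∀ᵐ ω ∂P, ω ∉ ⋃ j, {ω | g j ω ≤ 0} := by
      rw [← compl_mem_ae_iff] at hNnull
      exact hNnull
    filter_upwards [hcompl] with ω hω
    have hgpos : ∀ j, 0 < g j ω := by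
      intro j
      by_contra hc
      exact hω (mem_iUnion.mpr ⟨j, le_of_not_gt hc⟩)
    have hSpos : ∀ i, 0 < ∑ j ∈ Finset.range (i + 1), g j ω := fun i =>
      Finset.sum_pos (fun j _ => hgpos j) ⟨0, Finset.mem_range.mpr (Nat.succ_pos i)⟩
    constructor
    · intro H
      refine mem_iInter.mpr fun n => ?_
      intro i _
      have hS := hSpos i
      have hxx : xs i ω - x = ∑ j ∈ Finset.range (i + 1), g j ω := by rw [hxs]; ring
      have := H i
      rw [hxx, div_le_iff₀ hS, max_le_iff] at this
      have h1 := this.1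
      simp only [hEv, zero_add, mem_setOf_eq] at h1 ⊢
      linarith
    · intro H i
      have hS := hSpos i
      have hxx : xs i ω - x = ∑ j ∈ Finset.range (i + 1), g j ω := by rw [hxs]; ring
      have hin := mem_iInter.mp H (i + 1)
      have := hin i (Nat.lt_succ_self i)
      rw [hxx, div_le_iff₀ hS, max_le_iff]
      constructor
      · simp only [hEv, zero_add, mem_setOf_eq] at this
        linarith
      · positivity
  -- limit
  rw [hae]
  have hanti : Antitone fun n => Ev 0 n h0 := by
    intro n n' hnn' ω hω i hi
    exact hω i (lt_of_lt_of_le hi hnn')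
  have hlim : Filter.Tendsto (fun n => P (Ev 0 n h0)) Filter.atTop (nhds (P (⋂ n, Ev 0 n h0))) := by
    have := tendsto_measure_iInter_atTop (μ := P) (s := fun n => Ev 0 n h0)
      (fun n => (hEvMeas 0 n h0).nullMeasurableSet) hanti ⟨0, measure_ne_top P _⟩
    exact this
  have hlim2 : Filter.Tendsto (fun n => P (Ev 0 n h0)) Filter.atTop
      (nhds (ENNReal.ofReal (Real.exp (-(lam / (mu * t)) * Real.exp (-(mu * h0)))))) := by
    have heq : (fun n => P (Ev 0 n h0)) = fun n => ENNReal.ofReal (G lam mu t n h0) := by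
      funext n; exact key n 0 h0 hh0
    rw [heq]
    have hG : Filter.Tendsto (fun n => G lam mu t n h0) Filter.atTop
        (nhds (Real.exp (-(lam / (mu * t)) * Real.exp (-(mu * h0))))) := by
      rw [neg_mul]
      have hsq := G_squeeze hlam hmu ht
      have hρ : |lam / (lam + mu * t)| < 1 := by
        rw [abs_of_pos (by positivity)]
        rw [div_lt_one (by positivity)]
        nlinarith
      have hpow : Filter.Tendsto (fun n : ℕ => (lam / (lam + mu * t)) ^ n)
          Filter.atTop (nhds 0) := tendsto_pow_atTop_nhds_zero_of_abs_lt_one hρ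
      refine tendsto_of_tendsto_of_tendsto_of_le_of_le
        (g := fun _ : ℕ => Real.exp (-(lam / (mu * t) * Real.exp (-(mu * h0)))))
        (h := fun n : ℕ => Real.exp (-(lam / (mu * t) * Real.exp (-(mu * h0))))
          + lam / (mu * t) * Real.exp (-(mu * h0)) * (lam / (lam + mu * t)) ^ n)
        tendsto_const_nhds ?_
        (fun n => (hsq n h0 hh0).1) (fun n => (hsq n h0 hh0).2)
      have := hpow.const_mul (lam / (mu * t) * Real.exp (-(mu * h0)))
      simp only [mul_zero] at this
      have h2 := tendsto_const_nhds (α := ℕ)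
        (x := Real.exp (-(lam / (mu * t) * Real.exp (-(mu * h0))))) (f := Filter.atTop)
      have h3 := h2.add this
      simp only [add_zero] at h3
      convert h3 using 2 with n
      try ring
    exact (ENNReal.continuous_ofReal.tendsto _).comp hG
  exact tendsto_nhds_unique hlim hlim2
end

section
/- With (X⁺, H⁺) the argmax of h_i/x_i over a homogeneous PPP on (0,∞) with intensity λ and i.i.d. Exponential(μ) marks: H⁺ has density g(h) = μ²h·e^{−μh} (a Gamma(2, 1/μ) distribution), and X⁺ has density k(x) = 2λ√(λx)·K₁(2√(λx)), where K₁ is the modified Bessel function of the second kind of order 1. Moreover H⁺ and X⁺ are not independent. -/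
open MeasureTheory ProbabilityTheory Real Set
open scoped ENNReal

/-- Modified Bessel function of the second kind of order 1, via its integral
representation K₁(z) = ∫₀^∞ exp(−z cosh t) cosh t dt. -/
noncomputable def besselK1 (z : ℝ) : ℝ :=
  ∫ t in Set.Ioi (0 : ℝ), Real.exp (-z * Real.cosh t) * Real.cosh t

namespace ArgmaxMarginals

lemma besselK1_nonneg (z : ℝ) : 0 ≤ besselK1 z :=
  setIntegral_nonneg measurableSet_Ioi fun t _ =>
    mul_nonneg (Real.exp_pos _).le (Real.cosh_pos t).le

lemma besselK1_measurable : Measurable besselK1 := by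
  have hc : Continuous (Function.uncurry fun z t : ℝ =>
      Real.exp (-z * Real.cosh t) * Real.cosh t) := by
    apply Continuous.mul
    · exact Real.continuous_exp.comp
        ((continuous_fst.neg).mul (Real.continuous_cosh.comp continuous_snd))
    · exact Real.continuous_cosh.comp continuous_snd
  exact (hc.stronglyMeasurable.integral_prod_right).measurable

lemma int_exp_neg_mul {c : ℝ} (hc : 0 < c) :
    ∫ x in Ioi (0:ℝ), Real.exp (-(c * x)) = c⁻¹ := by
  have := integral_comp_mul_left_Ioi (fun y => Real.exp (-y)) 0 hc
  simp only [mul_zero, integral_exp_neg_Ioi_zero, smul_eq_mul, mul_one] at this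
  simpa using this

lemma lemA {lam mu : ℝ} (hlam : 0 < lam) (hmu : 0 < mu) {h : ℝ} (hh : 0 < h) :
    ∫ x in Ioi (0:ℝ), lam * mu * Real.exp (-(mu * h) - lam * x / (mu * h))
      = mu ^ 2 * h * Real.exp (-(mu * h)) := by
  have hmh : 0 < mu * h := mul_pos hmu hh
  have hc : 0 < lam / (mu * h) := div_pos hlam hmh
  have : ∀ x : ℝ, lam * mu * Real.exp (-(mu * h) - lam * x / (mu * h))
      = (lam * mu * Real.exp (-(mu * h))) * Real.exp (-(lam / (mu * h) * x)) := by
    intro x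
    rw [sub_eq_add_neg, Real.exp_add]
    ring_nf
  simp_rw [this]
  rw [integral_const_mul, int_exp_neg_mul hc]
  field_simp

lemma lemA_integrable {lam mu h : ℝ} (hlam : 0 < lam) (hmu : 0 < mu) (hh : 0 < h) :
    IntegrableOn (fun x => lam * mu * Real.exp (-(mu * h) - lam * x / (mu * h)))
      (Ioi (0:ℝ)) := by
  have hmh : 0 < mu * h := mul_pos hmu hh
  have hc : 0 < lam / (mu * h) := div_pos hlam hmh
  have heq : ∀ x : ℝ, lam * mu * Real.exp (-(mu * h) - lam * x / (mu * h))
      = (lam * mu * Real.exp (-(mu * h))) * Real.exp (-(lam / (mu * h) * x)) := by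
    intro x
    rw [sub_eq_add_neg, Real.exp_add]
    ring_nf
  simp_rw [heq]
  apply Integrable.const_mul
  simpa [mul_comm, IntegrableOn] using exp_neg_integrableOn_Ioi 0 hc

lemma f_meas (a : ℝ) : Measurable (fun u : ℝ => Real.exp (-u - a / u)) :=
  Real.measurable_exp.comp (measurable_id.neg.sub (measurable_const.div measurable_id))

lemma f_integrable {a : ℝ} (ha : 0 ≤ a) :
    IntegrableOn (fun u : ℝ => Real.exp (-u - a / u)) (Ioi (0:ℝ)) := by
  have hbase : IntegrableOn (fun u : ℝ => Real.exp (-u)) (Ioi (0:ℝ)) := by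
    simpa using exp_neg_integrableOn_Ioi 0 one_pos
  refine Integrable.mono hbase ((f_meas a).aestronglyMeasurable) ?_
  filter_upwards [ae_restrict_mem measurableSet_Ioi] with u hu
  rw [Real.norm_eq_abs, Real.norm_eq_abs, abs_of_pos (Real.exp_pos _),
    abs_of_pos (Real.exp_pos _)]
  apply Real.exp_le_exp.2
  have : 0 ≤ a / u := div_nonneg ha (le_of_lt hu)
  linarith

lemma image_exp_Ioi {s : ℝ} (hs : 0 < s) :
    (fun t : ℝ => s * Real.exp t) '' (Ioi 0) = Ioi s := by
  ext y
  constructor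
  · rintro ⟨t, ht, rfl⟩
    have h1 : (1:ℝ) < Real.exp t := by
      rw [← Real.exp_zero]; exact Real.exp_lt_exp.2 ht
    have := mul_lt_mul_of_pos_left h1 hs
    simpa using this
  · intro hy
    refine ⟨Real.log (y / s), ?_, ?_⟩
    · apply Real.log_pos
      rw [lt_div_iff₀ hs]; simpa using hy
    · show s * Real.exp (Real.log (y / s)) = y
      rw [Real.exp_log (div_pos (lt_trans hs hy) hs)]
      field_simp

lemma image_exp_neg_Ioi {s : ℝ} (hs : 0 < s) :
    (fun t : ℝ => s * Real.exp (-t)) '' (Ioi 0) = Ioo 0 s := by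
  ext y
  constructor
  · rintro ⟨t, ht, rfl⟩
    constructor
    · positivity
    · have h1 : Real.exp (-t) < 1 := by
        rw [← Real.exp_zero]; exact Real.exp_lt_exp.2 (by linarith [mem_Ioi.1 ht])
      have := mul_lt_mul_of_pos_left h1 hs
      simpa using this
  · rintro ⟨hy0, hys⟩
    refine ⟨Real.log (s / y), ?_, ?_⟩
    · apply Real.log_pos
      rw [lt_div_iff₀ hy0]; simpa using hys
    · show s * Real.exp (-Real.log (s / y)) = y
      rw [← Real.log_inv, Real.exp_log (by positivity)]
      field_simp

lemma inj_exp (s : ℝ) (hs : 0 < s) : InjOn (fun t : ℝ => s * Real.exp t) (Ioi 0) := by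
  intro t ht t' ht' h
  simpa [Real.exp_eq_exp] using mul_left_cancel₀ (ne_of_gt hs) h

lemma inj_exp_neg (s : ℝ) (hs : 0 < s) : InjOn (fun t : ℝ => s * Real.exp (-t)) (Ioi 0) := by
  intro t ht t' ht' h
  have := mul_left_cancel₀ (ne_of_gt hs) h
  rw [Real.exp_eq_exp] at this
  linarith

lemma intI {s : ℝ} (hs : 0 < s) :
    ∫ u in Ioi (0:ℝ), Real.exp (-u - s^2 / u) = 2 * s * besselK1 (2 * s) := by
  set f : ℝ → ℝ := fun u => Real.exp (-u - s^2 / u) with hf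
  have ha : (0:ℝ) ≤ s^2 := sq_nonneg s
  have hfI : IntegrableOn f (Ioi (0:ℝ)) := f_integrable ha
  have hfI1 : IntegrableOn f (Ioi s) := hfI.mono_set (Ioi_subset_Ioi hs.le)
  have hfI2 : IntegrableOn f (Ioo 0 s) := hfI.mono_set Ioo_subset_Ioi_self
  have hfI2' : IntegrableOn f (Ioc 0 s) := hfI.mono_set Ioc_subset_Ioi_self
  have hd1 : ∀ t ∈ Ioi (0:ℝ), HasDerivWithinAt (fun t : ℝ => s * Real.exp t)
      (s * Real.exp t) (Ioi 0) t := fun t _ =>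
    ((Real.hasDerivAt_exp t).const_mul s).hasDerivWithinAt
  have hd2 : ∀ t ∈ Ioi (0:ℝ), HasDerivWithinAt (fun t : ℝ => s * Real.exp (-t))
      (-(s * Real.exp (-t))) (Ioi 0) t := by
    intro t _
    have h0 : HasDerivAt (fun t : ℝ => Real.exp (-t)) (-Real.exp (-t)) t := by
      have := (Real.hasDerivAt_exp (-t)).comp t (hasDerivAt_neg t)
      simp only [mul_neg, mul_one] at this
      exact this
    simpa [mul_comm, mul_neg] using (h0.const_mul s).hasDerivWithinAt
  have key1 : ∀ t : ℝ, |s * Real.exp t| • f (s * Real.exp t)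
      = s * Real.exp t * Real.exp (-(2 * s * Real.cosh t)) := by
    intro t
    have he : Real.exp t ≠ 0 := Real.exp_ne_zero t
    have h2 : -(s * Real.exp t) - s^2 / (s * Real.exp t) = -(2 * s * Real.cosh t) := by
      rw [Real.cosh_eq]
      field_simp [Real.exp_neg]
      ring
      simp [← Real.exp_add]
    rw [smul_eq_mul, abs_of_pos (by positivity), hf]
    simp only [h2]
  have key2 : ∀ t : ℝ, |(-(s * Real.exp (-t)))| • f (s * Real.exp (-t))
      = s * Real.exp (-t) * Real.exp (-(2 * s * Real.cosh t)) := by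
    intro t
    have he : Real.exp (-t) ≠ 0 := Real.exp_ne_zero (-t)
    have h2 : -(s * Real.exp (-t)) - s^2 / (s * Real.exp (-t)) = -(2 * s * Real.cosh t) := by
      rw [Real.cosh_eq, Real.exp_neg]
      field_simp
      ring
    rw [smul_eq_mul, abs_neg, abs_of_pos (by positivity), hf]
    simp only [h2]
  have sub1 : ∫ u in Ioi s, f u
      = ∫ t in Ioi (0:ℝ), s * Real.exp t * Real.exp (-(2 * s * Real.cosh t)) := by
    rw [← image_exp_Ioi hs,
      integral_image_eq_integral_abs_deriv_smul measurableSet_Ioi hd1 (inj_exp s hs) f]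
    exact setIntegral_congr_fun measurableSet_Ioi (fun t _ => key1 t)
  have sub2 : ∫ u in Ioo 0 s, f u
      = ∫ t in Ioi (0:ℝ), s * Real.exp (-t) * Real.exp (-(2 * s * Real.cosh t)) := by
    rw [← image_exp_neg_Ioi hs,
      integral_image_eq_integral_abs_deriv_smul measurableSet_Ioi hd2 (inj_exp_neg s hs) f]
    exact setIntegral_congr_fun measurableSet_Ioi (fun t _ => key2 t)
  have himg1 : IntegrableOn f ((fun t : ℝ => s * Real.exp t) '' (Ioi 0)) := by
    rw [image_exp_Ioi hs]; exact hfI1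
  have himg2 : IntegrableOn f ((fun t : ℝ => s * Real.exp (-t)) '' (Ioi 0)) := by
    rw [image_exp_neg_Ioi hs]; exact hfI2
  have int1 : IntegrableOn (fun t => s * Real.exp t * Real.exp (-(2 * s * Real.cosh t)))
      (Ioi (0:ℝ)) := by
    have h3 := (integrableOn_image_iff_integrableOn_abs_deriv_smul measurableSet_Ioi hd1
      (inj_exp s hs) f).1 himg1
    exact h3.congr_fun (fun t _ => key1 t) measurableSet_Ioi
  have int2 : IntegrableOn (fun t => s * Real.exp (-t) * Real.exp (-(2 * s * Real.cosh t)))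
      (Ioi (0:ℝ)) := by
    have h3 := (integrableOn_image_iff_integrableOn_abs_deriv_smul measurableSet_Ioi hd2
      (inj_exp_neg s hs) f).1 himg2
    exact h3.congr_fun (fun t _ => key2 t) measurableSet_Ioi
  have hdisj : Disjoint (Ioc (0:ℝ) s) (Ioi s) := by
    rw [Set.disjoint_iff]; rintro u ⟨hu1, hu2⟩; exact absurd (mem_Ioi.1 hu2) (not_lt.2 hu1.2)
  have hsplit : ∫ u in Ioi (0:ℝ), f u = (∫ u in Ioo 0 s, f u) + ∫ u in Ioi s, f u := by
    rw [← integral_Ioc_eq_integral_Ioo,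
      ← setIntegral_union hdisj measurableSet_Ioi hfI2' hfI1, Ioc_union_Ioi_eq_Ioi hs.le]
  rw [hsplit, sub1, sub2, ← integral_add int2 int1]
  rw [besselK1, ← integral_const_mul]
  apply setIntegral_congr_fun measurableSet_Ioi
  intro t _
  show s * Real.exp (-t) * Real.exp (-(2 * s * Real.cosh t))
      + s * Real.exp t * Real.exp (-(2 * s * Real.cosh t))
    = 2 * s * (Real.exp (-(2 * s) * Real.cosh t) * Real.cosh t)
  rw [Real.cosh_eq, neg_mul]
  ring

lemma lemB {lam mu x : ℝ} (hlam : 0 < lam) (hmu : 0 < mu) (hx : 0 < x) :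
    ∫ h in Ioi (0:ℝ), lam * mu * Real.exp (-(mu * h) - lam * x / (mu * h))
      = 2 * lam * Real.sqrt (lam * x) * besselK1 (2 * Real.sqrt (lam * x)) := by
  have ha : 0 < lam * x := mul_pos hlam hx
  set s := Real.sqrt (lam * x) with hsdef
  have hs : 0 < s := Real.sqrt_pos.2 ha
  have hs2 : s ^ 2 = lam * x := Real.sq_sqrt ha.le
  have hcomp := integral_comp_mul_left_Ioi
    (fun u => lam * mu * Real.exp (-u - s^2 / u)) 0 hmu
  simp only [mul_zero] at hcomp
  have hL : ∫ h in Ioi (0:ℝ), lam * mu * Real.exp (-(mu * h) - lam * x / (mu * h))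
      = ∫ h in Ioi (0:ℝ), (fun u => lam * mu * Real.exp (-u - s^2 / u)) (mu * h) := by
    apply setIntegral_congr_fun measurableSet_Ioi
    intro h _
    simp only [hs2]
  rw [hL, hcomp, integral_const_mul, intI hs, smul_eq_mul]
  field_simp

lemma lemB_integrable {lam mu x : ℝ} (hlam : 0 < lam) (hmu : 0 < mu) (hx : 0 ≤ x) :
    IntegrableOn (fun h => lam * mu * Real.exp (-(mu * h) - lam * x / (mu * h)))
      (Ioi (0:ℝ)) := by
  have hbase : IntegrableOn (fun h : ℝ => lam * mu * Real.exp (-(mu * h))) (Ioi (0:ℝ)) := by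
    have := (exp_neg_integrableOn_Ioi 0 hmu).const_mul (lam * mu)
    simpa [mul_comm mu, IntegrableOn] using this
  have hmeas : Measurable (fun h : ℝ => lam * mu * Real.exp (-(mu * h) - lam * x / (mu * h))) := by
    apply Measurable.const_mul
    exact Real.measurable_exp.comp
      ((measurable_const_mul mu).neg.sub (measurable_const.div (measurable_const_mul mu)))
  refine Integrable.mono hbase hmeas.aestronglyMeasurable ?_
  filter_upwards [ae_restrict_mem measurableSet_Ioi] with h hh
  have hh' : (0:ℝ) < h := hh
  rw [Real.norm_eq_abs, Real.norm_eq_abs, abs_of_nonneg (by positivity),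
    abs_of_nonneg (by positivity)]
  apply mul_le_mul_of_nonneg_left _ (by positivity)
  apply Real.exp_le_exp.2
  have : 0 ≤ lam * x / (mu * h) := by positivity
  linarith

lemma marg_snd {j : ℝ × ℝ → ℝ≥0∞} (hj : Measurable j) {g : ℝ → ℝ≥0∞}
    (hg : ∀ h, ∫⁻ x, j (x, h) = g h) :
    Measure.map Prod.snd ((volume : Measure (ℝ × ℝ)).withDensity j)
      = (volume : Measure ℝ).withDensity g := by
  ext s hs
  rw [Measure.map_apply measurable_snd hs, withDensity_apply _ (measurable_snd hs),
    withDensity_apply _ hs]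
  have hpre : (Prod.snd : ℝ × ℝ → ℝ) ⁻¹' s = (univ : Set ℝ) ×ˢ s := by
    ext p; simp
  rw [hpre, Measure.volume_eq_prod, ← Measure.prod_restrict, Measure.restrict_univ,
    lintegral_prod_symm _ hj.aemeasurable]
  exact lintegral_congr fun h => hg h

lemma marg_fst {j : ℝ × ℝ → ℝ≥0∞} (hj : Measurable j) {g : ℝ → ℝ≥0∞}
    (hg : ∀ x, ∫⁻ h, j (x, h) = g x) :
    Measure.map Prod.fst ((volume : Measure (ℝ × ℝ)).withDensity j)
      = (volume : Measure ℝ).withDensity g := by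
  ext s hs
  rw [Measure.map_apply measurable_fst hs, withDensity_apply _ (measurable_fst hs),
    withDensity_apply _ hs]
  have hpre : (Prod.fst : ℝ × ℝ → ℝ) ⁻¹' s = s ×ˢ (univ : Set ℝ) := by
    ext p; simp
  rw [hpre, Measure.volume_eq_prod, ← Measure.prod_restrict, Measure.restrict_univ,
    lintegral_prod _ hj.aemeasurable]
  exact lintegral_congr fun x => hg x

end ArgmaxMarginals

open ArgmaxMarginals

/-- if (X⁺, H⁺) has joint density j(x,h) = λμ·exp(−μh − λx/(μh)) on
(0,∞)², then H⁺ has density μ²h·e^{−μh} (Gamma(2, 1/μ)), X⁺ has density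
2λ√(λx)·K₁(2√(λx)), and X⁺ and H⁺ are not independent. -/
theorem argmax_marginals_not_indep
    {Ω : Type*} [MeasurableSpace Ω] (P : Measure Ω) [IsProbabilityMeasure P]
    (lam mu : ℝ) (hlam : 0 < lam) (hmu : 0 < mu)
    (X H : Ω → ℝ) (hXm : Measurable X) (hHm : Measurable H)
    (hjoint : Measure.map (fun ω => (X ω, H ω)) P
      = (volume : Measure (ℝ × ℝ)).withDensity (fun p =>
          ENNReal.ofReal (if 0 < p.1 ∧ 0 < p.2 then
            lam * mu * Real.exp (-(mu * p.2) - lam * p.1 / (mu * p.2)) else 0))) :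
    (Measure.map H P = volume.withDensity (fun h =>
        ENNReal.ofReal (if 0 < h then mu ^ 2 * h * Real.exp (-(mu * h)) else 0)))
    ∧ (Measure.map X P = volume.withDensity (fun x =>
        ENNReal.ofReal (if 0 < x then
          2 * lam * Real.sqrt (lam * x) * besselK1 (2 * Real.sqrt (lam * x)) else 0)))
    ∧ ¬ IndepFun X H P := by
  set jd : ℝ × ℝ → ℝ≥0∞ := fun p =>
    ENNReal.ofReal (if 0 < p.1 ∧ 0 < p.2 then
      lam * mu * Real.exp (-(mu * p.2) - lam * p.1 / (mu * p.2)) else 0) with hjd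
  set gH : ℝ → ℝ≥0∞ := fun h =>
    ENNReal.ofReal (if 0 < h then mu ^ 2 * h * Real.exp (-(mu * h)) else 0) with hgH
  set gX : ℝ → ℝ≥0∞ := fun x =>
    ENNReal.ofReal (if 0 < x then
      2 * lam * Real.sqrt (lam * x) * besselK1 (2 * Real.sqrt (lam * x)) else 0) with hgX
  have hsetm : MeasurableSet {p : ℝ × ℝ | 0 < p.1 ∧ 0 < p.2} :=
    (measurable_fst measurableSet_Ioi).inter (measurable_snd measurableSet_Ioi)
  have hdm : Measurable (fun p : ℝ × ℝ =>
      lam * mu * Real.exp (-(mu * p.2) - lam * p.1 / (mu * p.2))) := by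
    apply Measurable.const_mul
    exact Real.measurable_exp.comp
      (((measurable_const.mul measurable_snd).neg).sub
        ((measurable_const.mul measurable_fst).div (measurable_const.mul measurable_snd)))
  have hjm : Measurable jd :=
    ENNReal.measurable_ofReal.comp (Measurable.ite hsetm hdm measurable_const)
  have hgHm : Measurable gH := by
    apply ENNReal.measurable_ofReal.comp
    apply Measurable.ite measurableSet_Ioi _ measurable_const
    exact ((measurable_const.mul measurable_id).mul
      (Real.measurable_exp.comp (measurable_const.mul measurable_id).neg))
  have hgXm : Measurable gX := by
    apply ENNReal.measurable_ofReal.comp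
    apply Measurable.ite measurableSet_Ioi _ measurable_const
    have hsq : Measurable fun x : ℝ => Real.sqrt (lam * x) :=
      Real.continuous_sqrt.measurable.comp (measurable_const.mul measurable_id)
    exact (measurable_const.mul hsq).mul
      (besselK1_measurable.comp (measurable_const.mul hsq))
  -- marginal density of H
  have hmargH : ∀ h, ∫⁻ x, jd (x, h) = gH h := by
    intro h
    by_cases hh : 0 < h
    · have hind : (fun x => jd (x, h)) = (Ioi (0:ℝ)).indicator
          (fun x => ENNReal.ofReal (lam * mu * Real.exp (-(mu * h) - lam * x / (mu * h)))) := by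
        ext x
        by_cases hx : 0 < x
        · simp [hjd, indicator_of_mem (mem_Ioi.2 hx), hx, hh]
        · simp [hjd, indicator_of_notMem (fun hmem => hx (mem_Ioi.1 hmem)), hx]
      rw [hind, lintegral_indicator measurableSet_Ioi,
        ← ofReal_integral_eq_lintegral_ofReal (lemA_integrable hlam hmu hh)
          (Filter.Eventually.of_forall fun x => by positivity),
        lemA hlam hmu hh]
      simp [hgH, hh]
    · have hz : ∀ x : ℝ, jd (x, h) = 0 := by
        intro x; simp [hjd, hh]
      simp only [hz, lintegral_zero]
      simp [hgH, hh]
  -- marginal density of X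
  have hmargX : ∀ x, ∫⁻ h, jd (x, h) = gX x := by
    intro x
    by_cases hx : 0 < x
    · have hind : (fun h => jd (x, h)) = (Ioi (0:ℝ)).indicator
          (fun h => ENNReal.ofReal (lam * mu * Real.exp (-(mu * h) - lam * x / (mu * h)))) := by
        ext h
        by_cases hh : 0 < h
        · simp [hjd, indicator_of_mem (mem_Ioi.2 hh), hx, hh]
        · simp [hjd, indicator_of_notMem (fun hmem => hh (mem_Ioi.1 hmem)), hh]
      rw [hind, lintegral_indicator measurableSet_Ioi,
        ← ofReal_integral_eq_lintegral_ofReal (lemB_integrable hlam hmu hx.le)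
          (Filter.Eventually.of_forall fun h => by positivity),
        lemB hlam hmu hx]
      simp [hgX, hx]
    · have hz : ∀ h : ℝ, jd (x, h) = 0 := by
        intro h; simp [hjd, hx]
      simp only [hz, lintegral_zero]
      simp [hgX, hx]
  have hH : Measure.map H P = volume.withDensity gH := by
    have h1 : Measure.map H P
        = Measure.map Prod.snd (Measure.map (fun ω => (X ω, H ω)) P) := by
      rw [Measure.map_map measurable_snd (hXm.prodMk hHm)]
      rfl
    rw [h1, hjoint, marg_snd hjm hmargH]
  have hX : Measure.map X P = volume.withDensity gX := by
    have h1 : Measure.map X P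
        = Measure.map Prod.fst (Measure.map (fun ω => (X ω, H ω)) P) := by
      rw [Measure.map_map measurable_fst (hXm.prodMk hHm)]
      rfl
    rw [h1, hjoint, marg_fst hjm hmargX]
  refine ⟨hH, hX, ?_⟩
  -- non-independence
  intro hind
  have hmap := (indepFun_iff_map_prod_eq_prod_map_map hXm.aemeasurable hHm.aemeasurable).1 hind
  rw [hjoint, hX, hH] at hmap
  have hprodD : (volume.withDensity gX).prod (volume.withDensity gH)
      = ((volume : Measure ℝ).prod volume).withDensity (fun p => gX p.1 * gH p.2) := by
    refine Measure.prod_eq fun s t hs ht => ?_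
    rw [withDensity_apply _ (hs.prod ht), ← Measure.prod_restrict,
      lintegral_prod_mul hgXm.aemeasurable hgHm.aemeasurable,
      withDensity_apply _ hs, withDensity_apply _ ht]
  rw [hprodD, Measure.volume_eq_prod] at hmap
  have hprodm : Measurable (fun p : ℝ × ℝ => gX p.1 * gH p.2) :=
    (hgXm.comp measurable_fst).mul (hgHm.comp measurable_snd)
  have haeeq : jd =ᵐ[(volume : Measure ℝ).prod volume] fun p => gX p.1 * gH p.2 :=
    (withDensity_eq_iff_of_sigmaFinite hjm.aemeasurable hprodm.aemeasurable).1 hmap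
  have hae2 := Measure.ae_ae_of_ae_prod haeeq
  -- pick a positive x in the a.e. set
  have hres0 : (volume : Measure ℝ).restrict (Ioi (0:ℝ)) ≠ 0 := by
    rw [Ne, Measure.restrict_eq_zero]
    simp [Real.volume_Ioi]
  haveI : (ae ((volume : Measure ℝ).restrict (Ioi (0:ℝ)))).NeBot := ae_neBot.2 hres0
  have hcomb : ∀ᵐ x ∂((volume : Measure ℝ).restrict (Ioi (0:ℝ))),
      x ∈ Ioi (0:ℝ) ∧ ∀ᵐ h ∂(volume : Measure ℝ), jd (x, h) = gX x * gH h :=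
    (ae_restrict_mem measurableSet_Ioi).and (ae_restrict_of_ae hae2)
  obtain ⟨x, hxmem, haeh⟩ := hcomb.exists
  have hx : (0:ℝ) < x := hxmem
  set C : ℝ := 2 * lam * Real.sqrt (lam * x) * besselK1 (2 * Real.sqrt (lam * x)) with hC
  have hCnn : 0 ≤ C := by
    apply mul_nonneg _ (besselK1_nonneg _)
    positivity
  set F : ℝ → ℝ := fun h => lam * mu * Real.exp (-(mu * h) - lam * x / (mu * h)) with hF
  set G : ℝ → ℝ := fun h => C * (mu ^ 2 * h * Real.exp (-(mu * h))) with hG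
  -- a point where F ≠ G
  obtain ⟨h₀, h₀pos, hne⟩ : ∃ h₀ : ℝ, 0 < h₀ ∧ F h₀ ≠ G h₀ := by
    rcases eq_or_lt_of_le hCnn with hC0 | hCpos
    · refine ⟨1, one_pos, ?_⟩
      have : G 1 = 0 := by rw [hG, ← hC0]; ring
      rw [this]
      have : 0 < F 1 := by rw [hF]; positivity
      exact ne_of_gt this
    · set h₀ : ℝ := max 1 (2 * lam / (C * mu)) with hh₀
      have h₀pos : 0 < h₀ := lt_of_lt_of_le one_pos (le_max_left _ _)
      refine ⟨h₀, h₀pos, ne_of_lt ?_⟩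
      have hle : 2 * lam / (C * mu) ≤ h₀ := le_max_right _ _
      have hCmu : 0 < C * mu := mul_pos hCpos hmu
      have h1 : 2 * lam * mu ≤ C * mu ^ 2 * h₀ := by
        have := mul_le_mul_of_nonneg_left hle (le_of_lt (mul_pos hCpos (mul_pos hmu hmu)))
        calc 2 * lam * mu = C * (mu * mu) * (2 * lam / (C * mu)) := by
              field_simp
          _ ≤ C * (mu * mu) * h₀ := this
          _ = C * mu ^ 2 * h₀ := by ring
      have hE : 0 < Real.exp (-(mu * h₀)) := Real.exp_pos _
      have hq : 0 ≤ lam * x / (mu * h₀) := by positivity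
      have hexple : Real.exp (-(mu * h₀) - lam * x / (mu * h₀)) ≤ Real.exp (-(mu * h₀)) := by
        apply Real.exp_le_exp.2; linarith
      have hFle : F h₀ ≤ lam * mu * Real.exp (-(mu * h₀)) := by
        rw [hF]
        exact mul_le_mul_of_nonneg_left hexple (by positivity)
      have hlt : lam * mu * Real.exp (-(mu * h₀)) < G h₀ := by
        show lam * mu * Real.exp (-(mu * h₀))
          < C * (mu ^ 2 * h₀ * Real.exp (-(mu * h₀)))
        nlinarith [mul_le_mul_of_nonneg_right h1 hE.le,
          mul_pos (mul_pos hlam hmu) hE]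
      exact lt_of_le_of_lt hFle hlt
  -- the set where F ≠ G on (0, ∞) is null
  have hbad : ∀ᵐ h ∂(volume : Measure ℝ), ¬(0 < h ∧ F h ≠ G h) := by
    filter_upwards [haeh] with h hh
    rintro ⟨hhpos, hne'⟩
    apply hne'
    have heq1 : ENNReal.ofReal (F h) = ENNReal.ofReal C
        * ENNReal.ofReal (mu ^ 2 * h * Real.exp (-(mu * h))) := by
      have := hh
      simp only [hjd, hgX, hgH] at this
      rw [if_pos (⟨hx, hhpos⟩ : 0 < x ∧ 0 < h), if_pos hx, if_pos hhpos] at this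
      exact this
    rw [← ENNReal.ofReal_mul hCnn] at heq1
    have hFnn : 0 ≤ F h := by rw [hF]; positivity
    have hGnn : 0 ≤ C * (mu ^ 2 * h * Real.exp (-(mu * h))) := by
      apply mul_nonneg hCnn; positivity
    have := (ENNReal.ofReal_eq_ofReal_iff hFnn hGnn).1 heq1
    rw [hG]
    exact this
  have hnull : (volume : Measure ℝ) {h : ℝ | 0 < h ∧ F h ≠ G h} = 0 := by
    rw [measure_eq_zero_iff_ae_notMem]
    filter_upwards [hbad] with h hh
    exact hh
  -- but that set is a neighborhood of h₀
  have hFc : ContinuousAt F h₀ := by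
    have hne0 : mu * h₀ ≠ 0 := ne_of_gt (mul_pos hmu h₀pos)
    have hc1 : ContinuousAt (fun h : ℝ => -(mu * h) - lam * x / (mu * h)) h₀ := by
      apply ContinuousAt.sub
      · exact ((continuous_const.mul continuous_id).neg).continuousAt
      · exact ContinuousAt.div continuousAt_const
          ((continuous_const.mul continuous_id).continuousAt) hne0
    exact continuousAt_const.mul (Real.continuous_exp.continuousAt.comp hc1)
  have hGc : ContinuousAt G h₀ := by
    apply Continuous.continuousAt
    exact continuous_const.mul ((continuous_const.mul continuous_id).mul
      (Real.continuous_exp.comp (continuous_const.mul continuous_id).neg))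
  have hnbhd : {h : ℝ | 0 < h ∧ F h ≠ G h} ∈ nhds h₀ := by
    have h1 : ∀ᶠ h in nhds h₀, F h - G h ≠ 0 :=
      (hFc.sub hGc).eventually_ne (sub_ne_zero.2 hne)
    have h2 : ∀ᶠ h in nhds h₀, 0 < h :=
      Filter.Tendsto.eventually_const_lt h₀pos Filter.tendsto_id
    filter_upwards [h1, h2] with h hh1 hh2
    exact ⟨hh2, sub_ne_zero.1 hh1⟩
  exact absurd hnull (ne_of_gt (Measure.measure_pos_of_mem_nhds _ hnbhd))
end

section
/- Let tan Θᵀ_{x,h} have density f(t) = (ρ/t²)·exp(−μh − e^{−μh}ρ(1/t − x/h)) on (0, h/x] and 0 elsewhere, with ρ = λ/μ. Then its k-th moment equals c(x,h)·α^{k−1}·Γ(−k+1, αx/h), where c(x,h) = (λ/μ)·exp((λx/(μh))e^{−μh} − μh), α = (λ/μ)e^{−μh}, and Γ(s, y) = ∫_y^∞ t^{s−1}e^{−t} dt is the upper incomplete Gamma function. -/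
open MeasureTheory Real Set

/-- Upper incomplete Gamma function Γ(s, y) = ∫_y^∞ t^{s−1} e^{−t} dt. -/
noncomputable def upperGamma (s y : ℝ) : ℝ :=
  ∫ t in Set.Ioi y, t ^ (s - 1) * Real.exp (-t)

/-! Since `e^{-μh} ρ = α`, the density is `c t⁻² e^{-α/t}` on `(0, h/x)`, so the `k`-th moment is
`c ∫₀^{h/x} t^{k-2} e^{-α/t} dt`. The substitution `t = α/u` turns this into
`c α^{k-1} ∫_{αx/h}^∞ u^{-k} e^{-u} du = c α^{k-1} Γ(1-k, αx/h)`. -/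

theorem image_const_div_Ioi_const_div {a b : ℝ} (ha : 0 < a) (hb : 0 < b) :
    (fun u : ℝ => a / u) '' Ioi (a / b) = Ioo 0 b := by
  have hcomp : (fun u : ℝ => a / u) = (a * ·) ∘ Inv.inv := by ext u; simp [div_eq_mul_inv]
  rw [hcomp, image_comp, image_inv_eq_inv, inv_Ioi₀ (by positivity), image_mul_left_Ioo ha,
    mul_zero, inv_div, mul_div_cancel₀ b ha.ne']

theorem integral_Ioo_zero_eq_integral_Ioi_const_div {E : Type*} [NormedAddCommGroup E]
    [NormedSpace ℝ E] {a b : ℝ} (ha : 0 < a) (hb : 0 < b) (g : ℝ → E) :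
    ∫ t in Ioo 0 b, g t = ∫ u in Ioi (a / b), (a / u ^ 2) • g (a / u) := by
  have hpos : ∀ u ∈ Ioi (a / b), 0 < u := fun u hu => (div_pos ha hb).trans hu
  have hderiv : ∀ u ∈ Ioi (a / b),
      HasDerivWithinAt (fun u => a / u) (-(a / u ^ 2)) (Ioi (a / b)) u := by
    intro u hu
    simpa [div_eq_mul_inv] using
      ((hasDerivAt_inv (hpos u hu).ne').const_mul a).hasDerivWithinAt
  have hinj : InjOn (fun u => a / u) (Ioi (a / b)) := fun u hu v hv huv => by
    simpa [div_eq_mul_inv, ha.ne'] using huv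
  rw [← image_const_div_Ioi_const_div ha hb,
    integral_image_eq_integral_abs_deriv_smul measurableSet_Ioi hderiv hinj]
  refine setIntegral_congr_fun measurableSet_Ioi fun u hu => ?_
  rw [abs_neg, abs_of_pos (by have := hpos u hu; positivity)]

theorem integral_Ioo_zero_rpow_mul_exp_neg_const_div {a b : ℝ} (ha : 0 < a) (hb : 0 < b)
    (s : ℝ) :
    ∫ t in Ioo 0 b, t ^ (s - 2) * exp (-(a / t)) = a ^ (s - 1) * upperGamma (1 - s) (a / b) := by
  rw [integral_Ioo_zero_eq_integral_Ioi_const_div ha hb, upperGamma, ← integral_const_mul]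
  refine setIntegral_congr_fun measurableSet_Ioi fun u hu => ?_
  have hu : 0 < u := (div_pos ha hb).trans hu
  have hpow : a / u ^ 2 * (a / u) ^ (s - 2) = a ^ (s - 1) * u ^ (1 - s - 1) := by
    rw [div_rpow ha.le hu.le, rpow_sub ha, rpow_sub hu, rpow_sub ha, rpow_sub hu, rpow_sub hu]
    simp only [rpow_one, rpow_two]
    field_simp
  simp only [smul_eq_mul, div_div_cancel₀ ha.ne', ← mul_assoc, hpow]

/-- the k-th moment of the transmissive-RIS blockage tangent, whose
density is f(t) = (ρ/t²)·exp(−μh − e^{−μh}ρ(1/t − x/h)) on (0, h/x], equals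
c(x,h)·α^{k−1}·Γ(−k+1, αx/h), with c(x,h) = (λ/μ)e^{(λx/(μh))e^{−μh} − μh} and
α = (λ/μ)e^{−μh}. -/
theorem transmissive_tangent_moments
    (lam mu x h : ℝ) (hlam : 0 < lam) (hmu : 0 < mu) (hx : 0 < x) (hh : 0 < h)
    (k : ℕ) (hk : 1 ≤ k)
    (rho : ℝ) (hrho : rho = lam / mu)
    (c α : ℝ)
    (hc : c = (lam / mu) * Real.exp ((lam * x / (mu * h)) * Real.exp (-(mu * h)) - mu * h))
    (hα : α = (lam / mu) * Real.exp (-(mu * h))) :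
    ∫ t in Set.Ioo 0 (h / x),
        t ^ k * ((rho / t ^ 2) *
          Real.exp (-(mu * h) - Real.exp (-(mu * h)) * rho * (1 / t - x / h)))
      = c * α ^ (k - 1) * upperGamma (-(k : ℝ) + 1) (α * x / h) := by
  have hα0 : 0 < α := hα ▸ by positivity
  have hdensity : ∀ t ∈ Ioo 0 (h / x),
      t ^ k * ((rho / t ^ 2) * exp (-(mu * h) - exp (-(mu * h)) * rho * (1 / t - x / h)))
        = c * (t ^ ((k : ℝ) - 2) * exp (-(α / t))) := by
    intro t ht
    have ht : 0 < t := ht.1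
    have hexponent : -(mu * h) - exp (-(mu * h)) * rho * (1 / t - x / h)
        = (lam * x / (mu * h)) * exp (-(mu * h)) - mu * h + -(α / t) := by
      rw [hrho, hα]; field_simp; ring
    rw [hexponent, exp_add, hc, hrho, rpow_sub ht, rpow_natCast, rpow_two]
    field_simp
  have hpow : α ^ ((k : ℝ) - 1) = α ^ (k - 1) := by
    rw [← rpow_natCast, Nat.cast_sub hk, Nat.cast_one]
  rw [setIntegral_congr_fun measurableSet_Ioo hdensity, integral_const_mul,
    integral_Ioo_zero_rpow_mul_exp_neg_const_div hα0 (div_pos hh hx), hpow, neg_add_eq_sub,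
    div_div_eq_mul_div, mul_assoc]
end

section
/- For x < 0 and h > 0, the blockage angle CDF under the reflective RIS, P[Θᴿ_{x,h} ≤ φ] = exp(−(ρ/tan φ)·e^{−μh}·e^{μ tan(φ)·x}), dominates the unconditioned blockage CDF P[θ ≤ φ] = exp(−ρ/tan φ) for every φ ∈ (0, π/2); consequently E[Θᴿ_{x,h}] ≤ E[θ]. -/
open MeasureTheory ProbabilityTheory Real Set

/-- for x < 0, h > 0, the reflective-RIS blockage-angle CDF
exp(−(ρ/tan φ)e^{−μh}e^{μ tan(φ) x}) dominates the unconditioned blockage CDF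
exp(−ρ/tan φ) on (0, π/2); consequently E[Θᴿ_{x,h}] ≤ E[θ]. -/
theorem reflective_RIS_stochastic_dominance
    {Ω : Type*} [MeasurableSpace Ω] (P : Measure Ω) [IsProbabilityMeasure P]
    (lam mu x h : ℝ) (hlam : 0 < lam) (hmu : 0 < mu) (hx : x < 0) (hh : 0 < h)
    (rho : ℝ) (hrho : rho = lam / mu)
    (θ Θ : Ω → ℝ) (hθm : Measurable θ) (hΘm : Measurable Θ)
    (hθr : ∀ ω, θ ω ∈ Set.Ico 0 (π / 2)) (hΘr : ∀ ω, Θ ω ∈ Set.Ico 0 (π / 2))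
    (hθc : ∀ φ ∈ Set.Ioo 0 (π / 2),
      P {ω | θ ω ≤ φ} = ENNReal.ofReal (Real.exp (-rho / Real.tan φ)))
    (hΘc : ∀ φ ∈ Set.Ioo 0 (π / 2),
      P {ω | Θ ω ≤ φ} = ENNReal.ofReal
        (Real.exp (-(rho / Real.tan φ) * Real.exp (-(mu * h))
          * Real.exp (mu * Real.tan φ * x)))) :
    (∀ φ ∈ Set.Ioo 0 (π / 2),
      Real.exp (-rho / Real.tan φ)
        ≤ Real.exp (-(rho / Real.tan φ) * Real.exp (-(mu * h))
            * Real.exp (mu * Real.tan φ * x)))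
    ∧ (∫ ω, Θ ω ∂P) ≤ ∫ ω, θ ω ∂P := by
  have hrho' : 0 < rho := by rw [hrho]; positivity
  -- Part 1: pointwise CDF dominance
  have part1 : ∀ φ ∈ Set.Ioo 0 (π / 2),
      Real.exp (-rho / Real.tan φ)
        ≤ Real.exp (-(rho / Real.tan φ) * Real.exp (-(mu * h))
            * Real.exp (mu * Real.tan φ * x)) := by
    intro φ hφ
    have htan : 0 < Real.tan φ := Real.tan_pos_of_pos_of_lt_pi_div_two hφ.1 hφ.2
    apply Real.exp_le_exp.2
    have e1 : Real.exp (-(mu * h)) ≤ 1 := Real.exp_le_one_iff.2 (by nlinarith)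
    have e2 : Real.exp (mu * Real.tan φ * x) ≤ 1 :=
      Real.exp_le_one_iff.2 (by nlinarith [mul_pos hmu htan])
    have e1p : 0 < Real.exp (-(mu * h)) := Real.exp_pos _
    have e2p : 0 < Real.exp (mu * Real.tan φ * x) := Real.exp_pos _
    have hr : 0 < rho / Real.tan φ := by positivity
    rw [neg_div]
    nlinarith [mul_le_one₀ e1 e2p.le e2, mul_pos e1p e2p]
  refine ⟨part1, ?_⟩
  -- Setup
  have hθnn : ∀ ω, 0 ≤ θ ω := fun ω => (hθr ω).1
  have hΘnn : ∀ ω, 0 ≤ Θ ω := fun ω => (hΘr ω).1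
  -- survival function comparison
  have hsurv : ∀ t ∈ Set.Ioi (0:ℝ),
      P {ω | t < Θ ω} ≤ P {ω | t < θ ω} := by
    intro t ht
    rcases lt_or_ge t (π / 2) with h2 | h2
    · have htmem : t ∈ Set.Ioo 0 (π / 2) := ⟨ht, h2⟩
      have hcdf : P {ω | θ ω ≤ t} ≤ P {ω | Θ ω ≤ t} := by
        rw [hθc t htmem, hΘc t htmem]
        exact ENNReal.ofReal_le_ofReal (part1 t htmem)
      have hc1 : {ω | t < Θ ω} = {ω | Θ ω ≤ t}ᶜ := by
        ext ω; simp [not_le]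
      have hc2 : {ω | t < θ ω} = {ω | θ ω ≤ t}ᶜ := by
        ext ω; simp [not_le]
      rw [hc1, hc2,
        measure_compl (show MeasurableSet {ω | Θ ω ≤ t} from hΘm measurableSet_Iic)
          (measure_ne_top P _),
        measure_compl (show MeasurableSet {ω | θ ω ≤ t} from hθm measurableSet_Iic)
          (measure_ne_top P _)]
      exact tsub_le_tsub_left hcdf _
    · have : {ω | t < Θ ω} = (∅ : Set Ω) := by
        ext ω; simp only [Set.mem_setOf_eq, Set.mem_empty_iff_false, iff_false, not_lt]
        exact le_trans (hΘr ω).2.le h2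
      rw [this]; simp
  -- layer cake
  have hlayθ := lintegral_eq_lintegral_meas_lt P (ae_of_all P hθnn) hθm.aemeasurable
  have hlayΘ := lintegral_eq_lintegral_meas_lt P (ae_of_all P hΘnn) hΘm.aemeasurable
  have hlint : (∫⁻ ω, ENNReal.ofReal (Θ ω) ∂P) ≤ ∫⁻ ω, ENNReal.ofReal (θ ω) ∂P := by
    rw [hlayθ, hlayΘ]
    refine lintegral_mono_ae ((ae_restrict_iff' measurableSet_Ioi).2 (ae_of_all _ ?_))
    exact fun t ht => hsurv t ht
  have hfinθ : (∫⁻ ω, ENNReal.ofReal (θ ω) ∂P) ≠ ⊤ := by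
    have : (∫⁻ ω, ENNReal.ofReal (θ ω) ∂P) ≤ ∫⁻ _, ENNReal.ofReal (π / 2) ∂P :=
      lintegral_mono fun ω => ENNReal.ofReal_le_ofReal (hθr ω).2.le
    rw [lintegral_const, measure_univ, mul_one] at this
    exact ne_top_of_le_ne_top ENNReal.ofReal_ne_top this
  rw [integral_eq_lintegral_of_nonneg_ae (ae_of_all P hθnn) hθm.aestronglyMeasurable,
    integral_eq_lintegral_of_nonneg_ae (ae_of_all P hΘnn) hΘm.aestronglyMeasurable]
  exact ENNReal.toReal_mono hfinθ hlint
end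

section
/- Conditioned on (X⁺, H⁺) = (x, h), let L = x + H/tan Θᵀ_{x,h}, where tan Θᵀ_{x,h} has density f(t) = (ρ/t²)·exp(−μh − e^{−μh}ρ(1/t − x/h)) on (0, h/x], ρ = λ/μ, and H > 0 is a constant. Then E[L] = x + H·(e^{μh}h + xρ)/(hρ), and hence E[L − (x + Hx/h)] = H·e^{μh}/ρ. -/
/-!
Substituting `u = 1/t - x/h` turns the density of `tan Θᵀ` into the exponential density of rate
`c = e^{-μh} ρ`, and `L = x + Hx/h + H u`; the two means are then `x + Hx/h + H/c` and `H/c`.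
Instead of substituting we integrate directly: `(a + B/c + B/t) e^{-c(1/t - 1/b)}` is an
antiderivative of `(a + B/t)` times the density and tends to `0` as `t → 0⁺`; nonnegativity of the
integrand supplies the integrability needed by the improper fundamental theorem of calculus.
-/

open MeasureTheory Real Set Filter Topology Function

theorem integral_Ioo_eq_sub_of_hasDerivAt_of_tendsto_of_nonneg {f f' : ℝ → ℝ} {a b fa fb : ℝ}
    (hab : a < b) (hderiv : ∀ x ∈ Ioo a b, HasDerivAt f (f' x) x)
    (hpos : ∀ x ∈ Ioo a b, 0 ≤ f' x)
    (ha : Tendsto f (𝓝[>] a) (𝓝 fa)) (hb : Tendsto f (𝓝[<] b) (𝓝 fb)) :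
    ∫ x in Ioo a b, f' x = fb - fa := by
  set F : ℝ → ℝ := update (update f a fa) b fb
  have hF : ∀ x ∈ Ioo a b, F x = f x := fun x hx => by
    simp only [F, update_of_ne hx.2.ne, update_of_ne hx.1.ne']
  have hFderiv : ∀ x ∈ Ioo a b, HasDerivAt F (f' x) x := fun x hx =>
    (hderiv x hx).congr_of_eventuallyEq <|
      eventually_of_mem (Ioo_mem_nhds hx.1 hx.2) fun y hy => hF y hy
  have hFcont : ContinuousOn F (Icc a b) := by
    rw [continuousOn_update_iff, continuousOn_update_iff, Icc_sdiff_right, Ico_sdiff_left]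
    refine ⟨⟨fun z hz => (hderiv z hz).continuousAt.continuousWithinAt, ?_⟩, ?_⟩
    · exact fun _ => ha.mono_left (nhdsWithin_mono _ Ioo_subset_Ioi_self)
    · rintro -
      refine (hb.congr' ?_).mono_left (nhdsWithin_mono _ Ico_subset_Iio_self)
      filter_upwards [Ioo_mem_nhdsLT hab] with _ hz using (update_of_ne hz.1.ne' _ _).symm
  have hint : IntervalIntegrable f' volume a b :=
    (intervalIntegrable_iff_integrableOn_Ioc_of_le hab.le).2
      (intervalIntegral.integrableOn_deriv_of_nonneg hFcont hFderiv hpos)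
  rw [← integral_Ioc_eq_integral_Ioo, ← intervalIntegral.integral_of_le hab.le,
    intervalIntegral.integral_eq_sub_of_hasDerivAt_of_le hab.le hFcont hFderiv hint]
  simp [F, hab.ne]

theorem tendsto_add_mul_exp_neg_mul_atTop (A B c : ℝ) (hc : 0 < c) :
    Tendsto (fun u : ℝ => (A + B * u) * exp (-c * u)) atTop (𝓝 0) := by
  have h0 := tendsto_rpow_mul_exp_neg_mul_atTop_nhds_zero 0 c hc
  have h1 := tendsto_rpow_mul_exp_neg_mul_atTop_nhds_zero 1 c hc
  simp only [rpow_zero, one_mul, rpow_one] at h0 h1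
  simpa [add_mul, mul_assoc] using (h0.const_mul A).add (h1.const_mul B)

theorem tendsto_add_div_mul_exp_neg_inv_nhdsGT_zero (A B c d : ℝ) (hc : 0 < c) :
    Tendsto (fun t : ℝ => (A + B / t) * exp (-c * (1 / t - d))) (𝓝[>] 0) (𝓝 0) := by
  have h := ((tendsto_add_mul_exp_neg_mul_atTop A B c hc).const_mul (exp (c * d))).comp
    tendsto_inv_nhdsGT_zero
  rw [mul_zero] at h
  refine h.congr fun t => ?_
  simp only [comp_apply, div_eq_mul_inv, one_mul]
  rw [mul_left_comm, ← exp_add]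
  ring_nf

/-- The density on `(0, b)` of `1 / (1 / b + E)` for `E` exponential of rate `c`. -/
noncomputable def invShiftedExpDensity (c b t : ℝ) : ℝ := c / t ^ 2 * exp (-c * (1 / t - 1 / b))

theorem hasDerivAt_add_div_mul_exp_neg_inv (a B b : ℝ) {c t : ℝ} (hc : c ≠ 0) (ht : t ≠ 0) :
    HasDerivAt (fun s => (a + B / c + B / s) * exp (-c * (1 / s - 1 / b)))
      ((a + B / t) * invShiftedExpDensity c b t) t := by
  have hinv : HasDerivAt (fun s : ℝ => s⁻¹) (-(t ^ 2)⁻¹) t := hasDerivAt_inv ht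
  have hfac : HasDerivAt (fun s => a + B / c + B / s) (B * -(t ^ 2)⁻¹) t := by
    simpa only [div_eq_mul_inv] using (hinv.const_mul B).const_add (a + B / c)
  have hexp : HasDerivAt (fun s => exp (-c * (1 / s - 1 / b)))
      (exp (-c * (1 / t - 1 / b)) * (-c * -(t ^ 2)⁻¹)) t := by
    simpa only [one_div] using ((hinv.sub_const b⁻¹).const_mul (-c)).exp
  refine (hfac.mul hexp).congr_deriv ?_
  unfold invShiftedExpDensity
  field_simp
  ring

theorem integral_add_div_mul_invShiftedExpDensity (a B : ℝ) {b c : ℝ} (hc : 0 < c) (hb : 0 < b)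
    (hB : 0 ≤ B) (ha : 0 ≤ a + B / b) :
    ∫ t in Ioo 0 b, (a + B / t) * invShiftedExpDensity c b t = a + B / b + B / c := by
  have hderiv : ∀ t ≠ 0, HasDerivAt (fun s => (a + B / c + B / s) * exp (-c * (1 / s - 1 / b)))
      ((a + B / t) * invShiftedExpDensity c b t) t := fun t ht =>
    hasDerivAt_add_div_mul_exp_neg_inv a B b hc.ne' ht
  have hpos : ∀ t ∈ Ioo 0 b, 0 ≤ (a + B / t) * invShiftedExpDensity c b t := by
    rintro t ⟨ht, htb⟩
    have : B / b ≤ B / t := div_le_div_of_nonneg_left hB ht htb.le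
    unfold invShiftedExpDensity
    exact mul_nonneg (by linarith) (by positivity)
  rw [integral_Ioo_eq_sub_of_hasDerivAt_of_tendsto_of_nonneg hb (fun t ht => hderiv t ht.1.ne')
    hpos (tendsto_add_div_mul_exp_neg_inv_nhdsGT_zero _ _ _ _ hc)
    (hderiv b hb.ne').continuousAt.continuousWithinAt]
  simp only [sub_self, mul_zero, exp_zero, mul_one, sub_zero]
  ring

theorem visibility_density_eq_invShiftedExpDensity (mu h x rho t : ℝ) :
    rho / t ^ 2 * exp (-(mu * h) - exp (-(mu * h)) * rho * (1 / t - x / h)) =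
      invShiftedExpDensity (exp (-(mu * h)) * rho) (h / x) t := by
  rw [invShiftedExpDensity, one_div_div, sub_eq_add_neg, exp_add]
  ring_nf

/-- with tan Θᵀ_{x,h} having density
f(t) = (ρ/t²)·exp(−μh − e^{−μh}ρ(1/t − x/h)) on (0, h/x], the mean visible
length L = x + H/tan Θᵀ_{x,h} at altitude h + H satisfies
E[L] = x + H(e^{μh}h + xρ)/(hρ), hence E[L − (x + Hx/h)] = H e^{μh}/ρ. -/
theorem transmissive_RIS_mean_visible_length
    (lam mu x h H : ℝ) (hlam : 0 < lam) (hmu : 0 < mu) (hx : 0 < x) (hh : 0 < h)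
    (hH : 0 < H) (rho : ℝ) (hrho : rho = lam / mu) :
    (∫ t in Set.Ioo 0 (h / x),
        (x + H / t) * ((rho / t ^ 2) *
          Real.exp (-(mu * h) - Real.exp (-(mu * h)) * rho * (1 / t - x / h)))
      = x + H * (Real.exp (mu * h) * h + x * rho) / (h * rho))
    ∧ (∫ t in Set.Ioo 0 (h / x),
        ((x + H / t) - (x + H * x / h)) * ((rho / t ^ 2) *
          Real.exp (-(mu * h) - Real.exp (-(mu * h)) * rho * (1 / t - x / h)))
      = H * Real.exp (mu * h) / rho) := by
  have hrho0 : 0 < rho := hrho ▸ div_pos hlam hmu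
  have hc : 0 < exp (-(mu * h)) * rho := by positivity
  have hb : 0 < h / x := div_pos hh hx
  simp only [visibility_density_eq_invShiftedExpDensity]
  have hshift : -(H * x / h) + H / (h / x) = 0 := by field_simp; ring
  constructor
  · rw [integral_add_div_mul_invShiftedExpDensity x H hc hb hH.le (by positivity), exp_neg]
    field_simp
    ring
  · have hcenter : ∀ t, (x + H / t) - (x + H * x / h) = -(H * x / h) + H / t := fun t => by ring
    simp only [hcenter]
    rw [integral_add_div_mul_invShiftedExpDensity _ H hc hb hH.le hshift.ge, hshift,
      zero_add, exp_neg]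
    field_simp
end

section
/- Let j(x,h) = λμ·e^{−μh − λx/(μh)} be the joint density of (X⁺, H⁺) and H > 0 a constant. Then ∫₀^∞∫₀^∞ (x + Hx/h)·j(x,h) dx dh = (2 + Hμ)/λ, i.e., the mean length of the visible region at altitude H⁺ + H without RIS equals (2 + Hμ)/λ. Moreover ∫₀^∞∫₀^∞ (H·e^{μh}/ρ)·j(x,h) dx dh = ∞, so the mean visible length with transmissive RIS is infinite. -/
open MeasureTheory Real Set

/-!
For fixed `h`, the density factors as `λμ e^{-μh} · e^{-b x}` with `b = λ/(μh)`, so every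
`x`-integral is a Gamma integral `∫₀^∞ tⁿ e^{-bt} dt = n!/bⁿ⁺¹`. Without RIS this turns the inner
integral into `(μ³/λ)(h² + Hh) e^{-μh}`, whose `h`-integral is `(μ³/λ)(2/μ³ + H/μ²)`. With RIS
the factor `e^{μh}` cancels the decay `e^{-μh}`, and the inner integral `(Hμ²/ρ) h` is not
integrable on `(0, ∞)`.
-/

open scoped Nat in
lemma integral_pow_mul_exp_neg_mul_Ioi {r : ℝ} (hr : 0 < r) (n : ℕ) :
    ∫ t in Ioi (0 : ℝ), t ^ n * exp (-(r * t)) = n ! / r ^ (n + 1) := by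
  have h := integral_rpow_mul_exp_neg_mul_Ioi (a := n + 1) (by positivity) hr
  rw [Gamma_nat_eq_factorial, add_sub_cancel_right, one_div, inv_rpow hr.le,
    ← Nat.cast_add_one, rpow_natCast] at h
  simpa only [rpow_natCast, inv_mul_eq_div] using h

lemma integrableOn_pow_mul_exp_neg_mul_Ioi {r : ℝ} (hr : 0 < r) (n : ℕ) :
    IntegrableOn (fun t => t ^ n * exp (-(r * t))) (Ioi 0) :=
  .of_integral_ne_zero (by rw [integral_pow_mul_exp_neg_mul_Ioi hr]; positivity)

lemma lintegral_ofReal_const_mul_exp_neg_mul_Ioi {c r : ℝ} (hc : 0 ≤ c) (hr : 0 < r) :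
    ∫⁻ t in Ioi (0 : ℝ), ENNReal.ofReal (c * exp (-(r * t))) = ENNReal.ofReal (c / r) := by
  have hint := (integrableOn_pow_mul_exp_neg_mul_Ioi hr 0).const_mul c
  simp only [pow_zero, one_mul] at hint
  rw [← ofReal_integral_eq_lintegral_ofReal hint (ae_of_all _ fun t => by positivity),
    integral_const_mul]
  simpa [div_eq_mul_inv] using congrArg (fun I => ENNReal.ofReal (c * I))
    (integral_pow_mul_exp_neg_mul_Ioi hr 0)

lemma lintegral_ofReal_const_mul_Ioi_eq_top {c : ℝ} (hc : 0 < c) :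
    ∫⁻ t in Ioi (0 : ℝ), ENNReal.ofReal (c * t) = ⊤ := by
  refine eq_top_iff.2 (calc
    (⊤ : ENNReal) = ∫⁻ _ in Ioi (1 : ℝ), ENNReal.ofReal c := by
      rw [setLIntegral_const, volume_Ioi, ENNReal.mul_top (by simpa using hc)]
    _ ≤ ∫⁻ t in Ioi (1 : ℝ), ENNReal.ofReal (c * t) :=
      setLIntegral_mono' measurableSet_Ioi fun t ht =>
        ENNReal.ofReal_le_ofReal (le_mul_of_one_le_right hc.le (le_of_lt ht))
    _ ≤ ∫⁻ t in Ioi (0 : ℝ), ENNReal.ofReal (c * t) :=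
      lintegral_mono_set (Ioi_subset_Ioi zero_le_one))

lemma exp_neg_mul_sub_div (lam mu h x : ℝ) :
    exp (-(mu * h) - lam * x / (mu * h)) = exp (-(mu * h)) * exp (-(lam / (mu * h) * x)) := by
  rw [← exp_add, mul_div_right_comm, sub_eq_add_neg]

lemma integral_mul_jointDensity {lam mu h : ℝ} (hlam : 0 < lam) (hmu : 0 < mu) (hh : 0 < h) :
    ∫ x in Ioi (0 : ℝ), x * (lam * mu * exp (-(mu * h) - lam * x / (mu * h)))
      = mu ^ 3 / lam * (h ^ 2 * exp (-(mu * h))) := by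
  have hb : 0 < lam / (mu * h) := by positivity
  simp_rw [exp_neg_mul_sub_div, show ∀ x : ℝ, x * (lam * mu * (exp (-(mu * h)) *
      exp (-(lam / (mu * h) * x)))) = lam * mu * exp (-(mu * h)) *
      (x ^ 1 * exp (-(lam / (mu * h) * x))) from fun x => by ring]
  rw [integral_const_mul, integral_pow_mul_exp_neg_mul_Ioi hb, div_pow]
  field_simp
  norm_num
  ring

lemma integral_visibleLength_mul_jointDensity {lam mu H h : ℝ} (hlam : 0 < lam) (hmu : 0 < mu)
    (hh : 0 < h) :
    ∫ x in Ioi (0 : ℝ), (x + H * x / h) * (lam * mu * exp (-(mu * h) - lam * x / (mu * h)))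
      = mu ^ 3 / lam * (h ^ 2 * exp (-(mu * h)))
        + mu ^ 3 * H / lam * (h ^ 1 * exp (-(mu * h))) := by
  simp_rw [show ∀ x : ℝ, (x + H * x / h) * (lam * mu * exp (-(mu * h) - lam * x / (mu * h)))
      = (1 + H / h) * (x * (lam * mu * exp (-(mu * h) - lam * x / (mu * h)))) from
    fun x => by ring]
  rw [integral_const_mul, integral_mul_jointDensity hlam hmu hh]
  field_simp

lemma lintegral_ofReal_risLength_mul_jointDensity {lam mu H rho h : ℝ} (hlam : 0 < lam)
    (hmu : 0 < mu) (hH : 0 ≤ H) (hrho : 0 ≤ rho) (hh : 0 < h) :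
    ∫⁻ x in Ioi (0 : ℝ), ENNReal.ofReal ((H * exp (mu * h) / rho)
        * (lam * mu * exp (-(mu * h) - lam * x / (mu * h))))
      = ENNReal.ofReal (H * mu ^ 2 / rho * h) := by
  have hb : 0 < lam / (mu * h) := by positivity
  simp_rw [exp_neg_mul_sub_div, show ∀ x : ℝ, H * exp (mu * h) / rho * (lam * mu *
      (exp (-(mu * h)) * exp (-(lam / (mu * h) * x)))) =
      H * lam * mu / rho * exp (-(lam / (mu * h) * x)) from fun x => by
        rw [exp_neg]; field_simp]
  rw [lintegral_ofReal_const_mul_exp_neg_mul_Ioi (by positivity) hb]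
  congr 1
  field_simp

/-- with j(x,h) = λμ e^{−μh − λx/(μh)} the joint density of
(X⁺, H⁺) and H > 0 a constant, the mean visible length at altitude H⁺ + H
without RIS is ∫∫ (x + Hx/h) j(x,h) dx dh = (2 + Hμ)/λ, while the mean
additional visible length with transmissive RIS,
∫∫ (H e^{μh}/ρ) j(x,h) dx dh, is infinite (ρ = λ/μ). -/
theorem mean_visible_length_with_and_without_RIS
    (lam mu H : ℝ) (hlam : 0 < lam) (hmu : 0 < mu) (hH : 0 < H)
    (rho : ℝ) (hrho : rho = lam / mu) :
    (∫ h in Set.Ioi (0 : ℝ), ∫ x in Set.Ioi (0 : ℝ),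
        (x + H * x / h) * (lam * mu * Real.exp (-(mu * h) - lam * x / (mu * h)))
      = (2 + H * mu) / lam)
    ∧ (∫⁻ h in Set.Ioi (0 : ℝ), ∫⁻ x in Set.Ioi (0 : ℝ),
        ENNReal.ofReal ((H * Real.exp (mu * h) / rho)
          * (lam * mu * Real.exp (-(mu * h) - lam * x / (mu * h))))
      = ⊤) := by
  have hrho_pos : 0 < rho := hrho ▸ div_pos hlam hmu
  constructor
  · rw [setIntegral_congr_fun measurableSet_Ioi
        fun h hh => integral_visibleLength_mul_jointDensity hlam hmu hh,
      integral_add ((integrableOn_pow_mul_exp_neg_mul_Ioi hmu 2).const_mul _)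
        ((integrableOn_pow_mul_exp_neg_mul_Ioi hmu 1).const_mul _),
      integral_const_mul, integral_const_mul, integral_pow_mul_exp_neg_mul_Ioi hmu,
      integral_pow_mul_exp_neg_mul_Ioi hmu]
    field_simp
    norm_num
    ring
  · rw [setLIntegral_congr_fun measurableSet_Ioi fun h hh =>
        lintegral_ofReal_risLength_mul_jointDensity hlam hmu hH.le hrho_pos.le hh]
    exact lintegral_ofReal_const_mul_Ioi_eq_top (by positivity)
end

section
/- For x, h, H, ν > 0 and ρ = λ/μ, with tan Θᵀ_{x,h} distributed with density f(t) = (ρ/t²)·exp(−μh − e^{−μh}ρ(1/t − x/h)) on (0, h/x], the conditional coverage probability τ_H(x,h) = 1 − ∫₀^{h/x} exp(−νH(1/t − x/h))·f(t) dt equals 1 − ρ/(e^{μh}Hν + ρ). -/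
/-!
The substitution `u = 1/t - x/h` maps `(0, h/x)` onto `(0, ∞)` with `du = -dt/t²`, and turns the
integral into `ρ e^{-μh} ∫₀^∞ e^{-c u} du = ρ e^{-μh} / c`, where `c = νH + e^{-μh} ρ`.
-/

open MeasureTheory Real Set

theorem image_inv_sub_Ioo_zero_inv {a : ℝ} (ha : 0 < a) :
    (fun t : ℝ => t⁻¹ - a) '' Ioo 0 a⁻¹ = Ioi 0 := by
  rw [← image_image (· - a) Inv.inv, image_inv_eq_inv, inv_Ioo_0_left (inv_pos.2 ha), inv_inv,
    image_sub_const_Ioi, sub_self]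

theorem integral_Ioo_comp_inv_sub_div_sq {a : ℝ} (ha : 0 < a) (g : ℝ → ℝ) :
    ∫ t in Ioo 0 a⁻¹, g (t⁻¹ - a) / t ^ 2 = ∫ u in Ioi 0, g u := by
  have hderiv : ∀ t ∈ Ioo 0 a⁻¹,
      HasDerivWithinAt (fun t : ℝ => t⁻¹ - a) (-(t ^ 2)⁻¹) (Ioo 0 a⁻¹) t := fun t ht =>
    ((hasDerivAt_inv ht.1.ne').sub_const a).hasDerivWithinAt
  have hinj : InjOn (fun t : ℝ => t⁻¹ - a) (Ioo 0 a⁻¹) := fun s _ t _ hst =>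
    inv_injective (sub_left_inj.mp hst)
  rw [← image_inv_sub_Ioo_zero_inv ha,
    integral_image_eq_integral_abs_deriv_smul measurableSet_Ioo hderiv hinj]
  refine setIntegral_congr_fun measurableSet_Ioo fun t _ => ?_
  rw [abs_neg, abs_inv, abs_of_nonneg (sq_nonneg t), smul_eq_mul, inv_mul_eq_div]

theorem integral_Ioi_exp_neg_mul {c : ℝ} (hc : 0 < c) :
    ∫ u in Ioi 0, exp (-(c * u)) = c⁻¹ := by
  simpa [neg_mul, div_neg, neg_div] using integral_exp_mul_Ioi (neg_neg_of_pos hc) 0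

/-- the conditional coverage probability
τ_H(x,h) = 1 − ∫₀^{h/x} exp(−νH(1/t − x/h)) f(t) dt with
f(t) = (ρ/t²)·exp(−μh − e^{−μh}ρ(1/t − x/h)) on (0, h/x] equals
1 − ρ/(e^{μh}Hν + ρ). -/
theorem conditional_coverage_probability
    (lam mu x h H nu : ℝ) (hlam : 0 < lam) (hmu : 0 < mu) (hx : 0 < x)
    (hh : 0 < h) (hH : 0 < H) (hnu : 0 < nu)
    (rho : ℝ) (hrho : rho = lam / mu) :
    1 - ∫ t in Set.Ioo 0 (h / x),
        Real.exp (-(nu * H) * (1 / t - x / h)) * ((rho / t ^ 2) *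
          Real.exp (-(mu * h) - Real.exp (-(mu * h)) * rho * (1 / t - x / h)))
      = 1 - rho / (Real.exp (mu * h) * H * nu + rho) := by
  have hrho_pos : 0 < rho := hrho ▸ div_pos hlam hmu
  set c := nu * H + exp (-(mu * h)) * rho with hc_def
  have hc : 0 < c := by positivity
  have hintegrand : ∀ t : ℝ,
      exp (-(nu * H) * (1 / t - x / h)) * ((rho / t ^ 2) *
          exp (-(mu * h) - exp (-(mu * h)) * rho * (1 / t - x / h)))
        = rho * exp (-(mu * h)) * exp (-(c * (t⁻¹ - x / h))) / t ^ 2 := fun t => by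
    rw [hc_def, mul_assoc rho, ← exp_add, mul_left_comm, ← exp_add, mul_div_right_comm]
    ring_nf
  simp_rw [hintegrand, ← inv_div x h]
  rw [integral_Ioo_comp_inv_sub_div_sq (by positivity)
      (fun u => rho * exp (-(mu * h)) * exp (-(c * u))),
    integral_const_mul, integral_Ioi_exp_neg_mul hc]
  congr 1
  field_simp
  have hexp : exp (mu * h) * exp (-(mu * h)) = 1 := by rw [← exp_add, add_neg_cancel, exp_zero]
  linear_combination (H * nu) * hexp
end
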